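/- arXiv:2605.08559 — 7 statements merged into one kernel-verified Lean document; each statement's English description precedes it below -/
import Mathlib

section
/- Let H be a real Hilbert space, let C ⊆ H be nonempty and convex, let L ≥ 0, and let ρ : C → ℝ be convex and L-Lipschitz on C. Fix N ≥ 1 and ξ_1, …, ξ_N ∈ C, and define R_N(x) = inf_{λ ∈ Δ_N} { Σ_{n=1}^N λ_n ρ(ξ_n) + L‖x − Σ_{n=1}^N λ_n ξ_n‖ }. Then R_N interpolates the data: R_N(ξ_m) = ρ(ξ_m) for every m = 1, …, N. -/
open scoped RealInnerProductSpace

/-- for convex Lipschitz data on a convex set the primal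
reconstruction functional interpolates the data. -/
theorem primal_reconstruction_interpolates
    {H : Type*} [NormedAddCommGroup H] [InnerProductSpace ℝ H] [CompleteSpace H]
    (C : Set H) (hC : C.Nonempty) (hCconv : Convex ℝ C)
    (L : ℝ) (hL : 0 ≤ L) (ρ : H → ℝ)
    (hρconv : ∀ x ∈ C, ∀ y ∈ C, ∀ t : ℝ, 0 ≤ t → t ≤ 1 →
      ρ (t • x + (1 - t) • y) ≤ t * ρ x + (1 - t) * ρ y)
    (hρlip : ∀ x ∈ C, ∀ y ∈ C, |ρ x - ρ y| ≤ L * ‖x - y‖)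
    (N : ℕ) (hN : 1 ≤ N) (ξ : Fin N → H) (hξ : ∀ n, ξ n ∈ C)
    (R : H → ℝ)
    (hR : ∀ x, R x = ⨅ l : stdSimplex ℝ (Fin N),
      (∑ n, l.1 n * ρ (ξ n) + L * ‖x - ∑ n, l.1 n • ξ n‖)) :
    ∀ m : Fin N, R (ξ m) = ρ (ξ m) := by
  have hconv : ConvexOn ℝ C ρ := by
    constructor
    · exact hCconv
    · intro x hx y hy a b ha hb hab
      have := hρconv x hx y hy a ha (by linarith)
      have hba : b = 1 - a := by linarith
      simpa [hba] using this
  intro m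
  rw [hR (ξ m)]
  -- lower bound for every λ
  have hlow : ∀ l : stdSimplex ℝ (Fin N),
      ρ (ξ m) ≤ ∑ n, l.1 n * ρ (ξ n) + L * ‖ξ m - ∑ n, l.1 n • ξ n‖ := by
    intro l
    have hmem : (∑ n, l.1 n • ξ n) ∈ C :=
      hCconv.sum_mem (fun i _ => l.2.1 i) (by simpa using l.2.2) (fun i _ => hξ i)
    have hjensen : ρ (∑ n, l.1 n • ξ n) ≤ ∑ n, l.1 n * ρ (ξ n) := by
      simpa [smul_eq_mul] using
        hconv.map_sum_le (fun i _ => l.2.1 i) (by simpa using l.2.2) (fun i _ => hξ i)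
    have hlip := hρlip (ξ m) (hξ m) (∑ n, l.1 n • ξ n) hmem
    have := abs_le.mp hlip
    linarith [this.2]
  have hδ : (fun n => if n = m then (1:ℝ) else 0) ∈ stdSimplex ℝ (Fin N) := by
    constructor
    · intro i; dsimp; split <;> norm_num
    · simp
  haveI : Nonempty (stdSimplex ℝ (Fin N)) := ⟨⟨_, hδ⟩⟩
  refine le_antisymm ?_ (le_ciInf hlow)
  -- upper bound: take the vertex λ = δ_m
  have := ciInf_le (f := fun l : stdSimplex ℝ (Fin N) =>
      ∑ n, l.1 n * ρ (ξ n) + L * ‖ξ m - ∑ n, l.1 n • ξ n‖)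
      (by exact ⟨ρ (ξ m), fun y ⟨l, hl⟩ => hl ▸ hlow l⟩) ⟨_, hδ⟩
  simpa using this
end

section
/- Let H be a real Hilbert space, L ≥ 0, N ≥ 1, ξ_1, …, ξ_N ∈ H, and y_1, …, y_N ∈ ℝ. Define g_N(x) = min_{1 ≤ n ≤ N} (y_n + L‖x − ξ_n‖) and R_N(x) = inf_{λ ∈ Δ_N} { Σ_{n=1}^N λ_n y_n + L‖x − Σ_{n=1}^N λ_n ξ_n‖ }. If h : H → ℝ is any convex function satisfying h(x) ≤ g_N(x) for all x ∈ H, then h(x) ≤ R_N(x) for all x ∈ H. In particular, R_N is the largest convex minorant of g_N. -/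
open scoped RealInnerProductSpace

private lemma aux_le_zero_of_le_div {a D : ℝ} (hle : ∀ s : ℝ, 1 ≤ s → a ≤ D / s) :
    a ≤ 0 := by
  have htend : Filter.Tendsto (fun s : ℝ => D / s) Filter.atTop (nhds 0) :=
    Filter.Tendsto.div_atTop tendsto_const_nhds Filter.tendsto_id
  exact ge_of_tendsto htend ((Filter.eventually_ge_atTop 1).mono hle)

/-- the primal reconstruction functional is the largest convex
minorant of the upper McShane extension. -/
theorem primal_reconstruction_largest_convex_minorant
    {H : Type*} [NormedAddCommGroup H] [InnerProductSpace ℝ H] [CompleteSpace H]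
    (L : ℝ) (hL : 0 ≤ L) (N : ℕ) (hN : 1 ≤ N) (ξ : Fin N → H) (y : Fin N → ℝ)
    (g : H → ℝ)
    (hg : ∀ x, g x = ⨅ n : Fin N, (y n + L * ‖x - ξ n‖))
    (R : H → ℝ)
    (hR : ∀ x, R x = ⨅ l : stdSimplex ℝ (Fin N),
      (∑ n, l.1 n * y n + L * ‖x - ∑ n, l.1 n • ξ n‖))
    (h : H → ℝ)
    (hconv : ∀ x z : H, ∀ t : ℝ, 0 ≤ t → t ≤ 1 →
      h (t • x + (1 - t) • z) ≤ t * h x + (1 - t) * h z)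
    (hminor : ∀ x : H, h x ≤ g x) :
    (∀ x : H, h x ≤ R x) ∧
    (∀ x : H, R x ≤ g x) ∧
    (∀ x z : H, ∀ t : ℝ, 0 ≤ t → t ≤ 1 →
      R (t • x + (1 - t) • z) ≤ t * R x + (1 - t) * R z) := by
  have hNe : Nonempty (Fin N) := ⟨⟨0, hN⟩⟩
  have hNeS : Nonempty (stdSimplex ℝ (Fin N)) :=
    ⟨⟨Pi.single ⟨0, hN⟩ 1, single_mem_stdSimplex ℝ _⟩⟩
  -- the objective
  set F : H → (Fin N → ℝ) → ℝ :=
    fun x l => ∑ n, l n * y n + L * ‖x - ∑ n, l n • ξ n‖ with hFdef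
  -- boundedness below
  have hbdd : ∀ x : H, BddBelow (Set.range fun l : stdSimplex ℝ (Fin N) => F x l.1) := by
    intro x
    refine ⟨-(∑ n, |y n|), ?_⟩
    rintro _ ⟨l, rfl⟩
    have h1 : -(∑ n, |y n|) ≤ ∑ n, l.1 n * y n := by
      rw [← Finset.sum_neg_distrib]
      refine Finset.sum_le_sum fun n _ => ?_
      have hln0 := l.2.1 n
      have hln1 : l.1 n ≤ 1 := by
        have := Finset.single_le_sum (f := l.1) (fun i _ => l.2.1 i) (Finset.mem_univ n)
        rw [l.2.2] at this; exact this
      nlinarith [neg_abs_le (y n), abs_nonneg (y n)]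
    have h2 : 0 ≤ L * ‖x - ∑ n, l.1 n • ξ n‖ := mul_nonneg hL (norm_nonneg _)
    simp only [F]
    linarith
  have hbddg : ∀ x : H, BddBelow (Set.range fun n : Fin N => y n + L * ‖x - ξ n‖) :=
    fun x => (Set.finite_range _).bddBelow
  -- R x ≤ F x l for l in the simplex
  have hRle : ∀ (x : H) (l : stdSimplex ℝ (Fin N)), R x ≤ F x l.1 := by
    intro x l
    rw [hR x]
    exact ciInf_le (hbdd x) l
  -- vertex evaluation : F x (single n) = y n + L‖x - ξ n‖
  have hvert : ∀ (x : H) (n : Fin N), F ((fun z => z) x) (Pi.single n 1) = y n + L * ‖x - ξ n‖ := by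
    intro x n
    simp only [F]
    have e1 : ∑ m, (Pi.single n (1 : ℝ) : Fin N → ℝ) m * y m = y n := by
      rw [Finset.sum_eq_single n]
      · simp
      · intro m _ hm; simp [Pi.single_apply, hm]
      · simp
    have e2 : ∑ m, (Pi.single n (1 : ℝ) : Fin N → ℝ) m • ξ m = ξ n := by
      simp [Pi.single_apply, ite_smul]
    rw [e1, e2]
  -- Part 2 : R ≤ g
  have part2 : ∀ x : H, R x ≤ g x := by
    intro x
    rw [hg x]
    refine le_ciInf fun n => ?_
    have := hRle x ⟨Pi.single n 1, single_mem_stdSimplex ℝ n⟩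
    rwa [hvert x n] at this
  -- convexity of h as ConvexOn
  have hco : ConvexOn ℝ Set.univ h := by
    refine ⟨convex_univ, fun x _ z _ a b ha hb hab => ?_⟩
    have := hconv x z a ha (by linarith)
    simp only [smul_eq_mul]
    have hb' : (1 : ℝ) - a = b := by linarith
    rwa [hb'] at this
  -- h(ξ n) ≤ y n
  have hhy : ∀ n : Fin N, h (ξ n) ≤ y n := by
    intro n
    refine (hminor (ξ n)).trans ?_
    rw [hg (ξ n)]
    have := ciInf_le (hbddg (ξ n)) n
    simpa using this
  -- Part 1 : h ≤ R
  have part1 : ∀ x : H, h x ≤ R x := by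
    intro x
    rw [hR x]
    refine le_ciInf fun l => ?_
    set b : H := ∑ n, l.1 n • ξ n with hb
    set S : ℝ := ∑ n, l.1 n * y n with hS
    -- Jensen : h b ≤ S
    have hJ : h b ≤ S := by
      have := hco.map_sum_le (t := Finset.univ) (fun i _ => l.2.1 i) l.2.2
        (fun i _ => Set.mem_univ (ξ i))
      simpa [smul_eq_mul, hS, hb] using
        this.trans (Finset.sum_le_sum fun i _ =>
          mul_le_mul_of_nonneg_left (hhy i) (l.2.1 i))
    -- choose index 0 for the far-point bound
    set n0 : Fin N := ⟨0, hN⟩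
    set D : ℝ := y n0 + L * ‖b - ξ n0‖ - S with hD
    have key : ∀ s : ℝ, 1 ≤ s → h x - S - L * ‖x - b‖ ≤ D / s := by
      intro s hs
      have hs0 : 0 < s := lt_of_lt_of_le one_pos hs
      have ht0 : (0:ℝ) ≤ 1 / s := by positivity
      have ht1 : 1 / s ≤ 1 := by
        rw [div_le_one hs0]; exact hs
      set p : H := b + s • (x - b) with hp
      have hxp : (1 / s) • p + (1 - 1 / s) • b = x := by
        rw [hp]
        rw [smul_add, smul_smul, one_div_mul_cancel (ne_of_gt hs0), sub_smul]
        module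
      have h1 : h x ≤ (1/s) * h p + (1 - 1/s) * h b := by
        have := hconv p b (1/s) ht0 ht1
        rwa [hxp] at this
      have h2 : h p ≤ y n0 + L * ‖p - ξ n0‖ := by
        refine (hminor p).trans ?_
        rw [hg p]
        exact ciInf_le (hbddg p) n0
      have h3 : ‖p - ξ n0‖ ≤ ‖b - ξ n0‖ + s * ‖x - b‖ := by
        have : p - ξ n0 = (b - ξ n0) + s • (x - b) := by rw [hp]; abel
        rw [this]
        calc ‖(b - ξ n0) + s • (x - b)‖ ≤ ‖b - ξ n0‖ + ‖s • (x - b)‖ := norm_add_le _ _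
          _ = ‖b - ξ n0‖ + s * ‖x - b‖ := by
              rw [norm_smul, Real.norm_of_nonneg hs0.le]
      have h4 : h p ≤ y n0 + L * ‖b - ξ n0‖ + L * (s * ‖x - b‖) := by
        nlinarith [mul_le_mul_of_nonneg_left h3 hL]
      have h5 : (1 - 1/s) * h b ≤ (1 - 1/s) * S :=
        mul_le_mul_of_nonneg_left hJ (by linarith)
      have h6 : (1/s) * (L * (s * ‖x - b‖)) = L * ‖x - b‖ := by
        field_simp
      have h7 : h x ≤ (1/s) * (y n0 + L * ‖b - ξ n0‖) + L * ‖x - b‖ + (1 - 1/s) * S := by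
        calc h x ≤ (1/s) * h p + (1 - 1/s) * h b := h1
          _ ≤ (1/s) * (y n0 + L * ‖b - ξ n0‖ + L * (s * ‖x - b‖)) + (1 - 1/s) * S := by
              have := mul_le_mul_of_nonneg_left h4 ht0
              linarith
          _ = (1/s) * (y n0 + L * ‖b - ξ n0‖) + L * ‖x - b‖ + (1 - 1/s) * S := by
              rw [mul_add, h6]
      have hfin : h x - S - L * ‖x - b‖ ≤ (1/s) * D := by
        rw [hD]; nlinarith
      rwa [one_div, ← div_eq_inv_mul] at hfin
    have := aux_le_zero_of_le_div key
    have : h x ≤ S + L * ‖x - b‖ := by linarith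
    simpa [F, hS, hb] using this
  refine ⟨part1, part2, ?_⟩
  -- Part 3 : convexity of R
  intro x z t ht0 ht1
  rw [hR (t • x + (1 - t) • z)]
  refine le_of_forall_pos_le_add fun ε hε => ?_
  obtain ⟨lx, hlx⟩ : ∃ l : stdSimplex ℝ (Fin N), F x l.1 < R x + ε / 2 := by
    have : R x < R x + ε / 2 := by linarith
    rw [hR x] at this
    exact exists_lt_of_ciInf_lt (by rw [hR x]; exact this)
  obtain ⟨lz, hlz⟩ : ∃ l : stdSimplex ℝ (Fin N), F z l.1 < R z + ε / 2 := by
    have : R z < R z + ε / 2 := by linarith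
    exact exists_lt_of_ciInf_lt (by rw [hR z] at this ⊢; exact this)
  set ν : Fin N → ℝ := fun n => t * lx.1 n + (1 - t) * lz.1 n with hν
  have hνmem : ν ∈ stdSimplex ℝ (Fin N) := by
    constructor
    · intro n
      have := lx.2.1 n; have := lz.2.1 n
      have h1t : (0:ℝ) ≤ 1 - t := by linarith
      positivity
    · simp only [ν, Finset.sum_add_distrib, ← Finset.mul_sum, lx.2.2, lz.2.2]
      ring
  have hsum1 : ∑ n, ν n * y n = t * (∑ n, lx.1 n * y n) + (1 - t) * (∑ n, lz.1 n * y n) := by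
    simp only [ν, Finset.mul_sum, ← Finset.sum_add_distrib]
    congr 1; ext n; ring
  have hsum2 : ∑ n, ν n • ξ n =
      t • (∑ n, lx.1 n • ξ n) + (1 - t) • (∑ n, lz.1 n • ξ n) := by
    simp only [ν, Finset.smul_sum, ← Finset.sum_add_distrib]
    congr 1; ext n
    module
  have hnorm : ‖(t • x + (1 - t) • z) - ∑ n, ν n • ξ n‖ ≤
      t * ‖x - ∑ n, lx.1 n • ξ n‖ + (1 - t) * ‖z - ∑ n, lz.1 n • ξ n‖ := by
    rw [hsum2]
    have : (t • x + (1 - t) • z) - (t • (∑ n, lx.1 n • ξ n) + (1 - t) • (∑ n, lz.1 n • ξ n))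
        = t • (x - ∑ n, lx.1 n • ξ n) + (1 - t) • (z - ∑ n, lz.1 n • ξ n) := by
      rw [smul_sub, smul_sub]; abel
    rw [this]
    calc ‖t • (x - ∑ n, lx.1 n • ξ n) + (1 - t) • (z - ∑ n, lz.1 n • ξ n)‖
        ≤ ‖t • (x - ∑ n, lx.1 n • ξ n)‖ + ‖(1 - t) • (z - ∑ n, lz.1 n • ξ n)‖ :=
          norm_add_le _ _
      _ = t * ‖x - ∑ n, lx.1 n • ξ n‖ + (1 - t) * ‖z - ∑ n, lz.1 n • ξ n‖ := by
          rw [norm_smul, norm_smul, Real.norm_of_nonneg ht0,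
            Real.norm_of_nonneg (by linarith : (0:ℝ) ≤ 1 - t)]
  have hFcomb : F (t • x + (1 - t) • z) ν ≤ t * F x lx.1 + (1 - t) * F z lz.1 := by
    simp only [F]
    rw [hsum1]
    have := mul_le_mul_of_nonneg_left hnorm hL
    nlinarith
  have hle : (⨅ l : stdSimplex ℝ (Fin N), F (t • x + (1 - t) • z) l.1) ≤
      F (t • x + (1 - t) • z) ν := ciInf_le (hbdd _) ⟨ν, hνmem⟩
  have ht1' : (0:ℝ) ≤ 1 - t := by linarith
  calc (⨅ l : stdSimplex ℝ (Fin N),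
      (∑ n, l.1 n * y n + L * ‖(t • x + (1 - t) • z) - ∑ n, l.1 n • ξ n‖))
      ≤ F (t • x + (1 - t) • z) ν := hle
    _ ≤ t * F x lx.1 + (1 - t) * F z lz.1 := hFcomb
    _ ≤ t * (R x + ε / 2) + (1 - t) * (R z + ε / 2) := by
        have := mul_le_mul_of_nonneg_left hlx.le ht0
        have := mul_le_mul_of_nonneg_left hlz.le ht1'
        linarith
    _ = t * R x + (1 - t) * R z + ε / 2 := by ring
    _ ≤ t * R x + (1 - t) * R z + ε := by linarith
end

section
/- Let H be a real Hilbert space, L ≥ 0, N ≥ 1, ξ_1, …, ξ_N ∈ H, and y_1, …, y_N ∈ ℝ. Then for every x ∈ H, min_{λ ∈ Δ_N} { Σ_{n=1}^N λ_n y_n + L‖x − Σ_{n=1}^N λ_n ξ_n‖ } = sup_{p ∈ H, ‖p‖ ≤ L} { ⟨p, x⟩ + min_{1 ≤ n ≤ N} ( y_n − ⟨p, ξ_n⟩ ) }. -/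
open scoped RealInnerProductSpace

/-!
Weak duality is Cauchy–Schwarz: for `‖p‖ ≤ L` and `l ∈ Δ`, the minimum of `y n - ⟪p, ξ n⟫` is at
most its `l`-average, and `⟪p, x - ∑ l n • ξ n⟫ ≤ L * ‖x - ∑ l n • ξ n‖`.

For the converse let `m` be the primal value. The points `(∑ l n • ξ n - x, ∑ l n * y n - m)`
form a convex set disjoint from the open convex cone `{(c, b) | b + L * ‖c‖ < 0}`. The cone forces
a separating functional to have positive `ℝ`-component; after normalising it becomes
`(c, b) ↦ b - g c` with `‖g‖ ≤ L`, nonnegative at the vertices `(ξ n - x, y n - m)`. Representing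
`g` on the finite-dimensional span of the `ξ n - x` by a vector `p` with `‖p‖ ≤ ‖g‖` gives
`m ≤ ⟪p, x⟫ + ⨅ n, (y n - ⟪p, ξ n⟫)`.
-/

theorem nonpos_of_forall_pos_mul_lt {a u : ℝ} (h : ∀ t > 0, t * a < u) : a ≤ 0 := by
  by_contra! ha
  have := h ((|u| + 1) / a) (by positivity)
  rw [div_mul_cancel₀ _ ha.ne'] at this
  linarith [le_abs_self u]

theorem nonneg_of_forall_pos_mul_lt {a u : ℝ} (h : ∀ t > 0, t * a < u) : 0 ≤ u :=
  le_of_tendsto (((continuous_mul_const a).tendsto' 0 0 (zero_mul a)).mono_left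
    (nhdsWithin_le_nhds (s := Set.Ioi 0)))
    (eventually_nhdsWithin_of_forall fun t ht => (h t ht).le)

theorem ContinuousLinearMap.opNorm_le_of_apply_le {E : Type*} [SeminormedAddCommGroup E]
    [NormedSpace ℝ E] {f : StrongDual ℝ E} {C : ℝ} (hC : 0 ≤ C) (hf : ∀ x, f x ≤ C * ‖x‖) :
    ‖f‖ ≤ C :=
  f.opNorm_le_bound hC fun x => abs_le.2
    ⟨neg_le.2 (by simpa using hf (-x)), hf x⟩

section Normed

variable {E : Type*} [NormedAddCommGroup E] [NormedSpace ℝ E]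

theorem convex_setOf_snd_add_mul_norm_lt {L : ℝ} (hL : 0 ≤ L) :
    Convex ℝ {z : E × ℝ | z.2 + L * ‖z.1‖ < 0} := by
  have : ConvexOn ℝ Set.univ fun z : E × ℝ => z.2 + L * ‖z.1‖ :=
    (LinearMap.snd ℝ E ℝ).convexOn convex_univ |>.add
      (((convexOn_norm convex_univ).comp_linearMap (LinearMap.fst ℝ E ℝ)).smul hL)
  simpa using this.convex_lt 0

theorem exists_norm_le_forall_apply_le_of_disjoint {L : ℝ} (hL : 0 ≤ L) {C : Set (E × ℝ)}
    (hC : Convex ℝ C) (hCne : C.Nonempty)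
    (hdisj : Disjoint {z : E × ℝ | z.2 + L * ‖z.1‖ < 0} C) :
    ∃ g : StrongDual ℝ E, ‖g‖ ≤ L ∧ ∀ z ∈ C, g z.1 ≤ z.2 := by
  obtain ⟨f, u, hfK, hfC⟩ := geometric_hahn_banach_open (convex_setOf_snd_add_mul_norm_lt hL)
    (isOpen_lt (by fun_prop) continuous_const) hC hdisj
  set s := f (0, 1)
  set g := f.comp (ContinuousLinearMap.inl ℝ E ℝ)
  have hf : ∀ c b, f (c, b) = g c + b * s := fun c b => by
    have : ((c, b) : E × ℝ) = (c, 0) + b • (0, 1) := by simp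
    rw [this, map_add, map_smul, smul_eq_mul]
    rfl
  have hK : ∀ c b, b + L * ‖c‖ < 0 → g c + b * s < u := fun c b h => hf c b ▸ hfK (c, b) h
  have hKs : ∀ t > 0, t * -s < u := fun t ht => by
    simpa using hK 0 (-t) (by simpa using ht)
  have hs : 0 ≤ s := neg_nonpos.1 (nonpos_of_forall_pos_mul_lt hKs)
  have hu : 0 ≤ u := nonneg_of_forall_pos_mul_lt hKs
  have hg : ∀ c, g c ≤ s * L * ‖c‖ := fun c => by
    refine sub_nonpos.1 (nonpos_of_forall_pos_mul_lt (u := u + s) fun t ht => ?_)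
    have := hK (t • c) (-(L * ‖t • c‖) - 1) (by linarith)
    rw [map_smul, norm_smul, Real.norm_of_nonneg ht.le, smul_eq_mul] at this
    linarith
  obtain ⟨z₀, hz₀⟩ := hCne
  have hs_pos : 0 < s := by
    refine hs.lt_of_ne fun hs0 => ?_
    have h1 := (hfC z₀ hz₀).trans_eq (hf z₀.1 z₀.2)
    have h2 := hK 0 (-1) (by simp)
    have h3 := hg z₀.1
    rw [← hs0] at h1 h2 h3
    simp only [map_zero, mul_zero, zero_mul, add_zero] at h1 h2 h3
    linarith
  refine ⟨-s⁻¹ • g, ?_, fun z hz => ?_⟩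
  · rw [norm_smul, norm_neg, norm_inv, Real.norm_of_nonneg hs, inv_mul_le_iff₀ hs_pos]
    exact g.opNorm_le_of_apply_le (by positivity) fun c => (hg c).trans_eq (by ring)
  · have := hu.trans ((hfC z hz).trans_eq (hf z.1 z.2))
    rw [smul_apply, smul_eq_mul, neg_mul, neg_le, le_inv_mul_iff₀ hs_pos]
    linarith

end Normed

section InnerProduct

variable {H : Type*} [NormedAddCommGroup H] [InnerProductSpace ℝ H]

theorem exists_norm_le_inner_eq_of_finiteDimensional (g : StrongDual ℝ H) (V : Submodule ℝ H)
    [FiniteDimensional ℝ V] : ∃ p : H, ‖p‖ ≤ ‖g‖ ∧ ∀ v ∈ V, ⟪p, v⟫ = g v := by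
  set q := (InnerProductSpace.toDual ℝ V).symm (g.comp V.subtypeL)
  refine ⟨q, ?_, fun v hv => InnerProductSpace.toDual_symm_apply (x := (⟨v, hv⟩ : V))⟩
  calc ‖(q : H)‖ = ‖g.comp V.subtypeL‖ := by rw [V.norm_coe, LinearIsometryEquiv.norm_map]
    _ ≤ ‖g‖ * ‖V.subtypeL‖ := g.opNorm_comp_le _
    _ ≤ ‖g‖ := mul_le_of_le_one_right (norm_nonneg g) V.norm_subtypeL_le

variable {ι : Type*} [Fintype ι]

theorem iInf_le_sum_mul_of_mem_stdSimplex (f : ι → ℝ) {l : ι → ℝ} (hl : l ∈ stdSimplex ℝ ι) :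
    ⨅ n, f n ≤ ∑ n, l n * f n :=
  calc ⨅ n, f n = ∑ n, l n * ⨅ k, f k := by rw [← Finset.sum_mul, hl.2, one_mul]
    _ ≤ ∑ n, l n * f n := Finset.sum_le_sum fun n _ =>
      mul_le_mul_of_nonneg_left (ciInf_le (Set.finite_range f).bddBelow n) (hl.1 n)

theorem inner_add_iInf_le_sum_mul_add_mul_norm {L : ℝ} {p : H} (hp : ‖p‖ ≤ L) (x : H)
    (ξ : ι → H) (y : ι → ℝ) {l : ι → ℝ} (hl : l ∈ stdSimplex ℝ ι) :
    ⟪p, x⟫ + ⨅ n, (y n - ⟪p, ξ n⟫) ≤ ∑ n, l n * y n + L * ‖x - ∑ n, l n • ξ n‖ :=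
  calc ⟪p, x⟫ + ⨅ n, (y n - ⟪p, ξ n⟫) ≤ ⟪p, x⟫ + ∑ n, l n * (y n - ⟪p, ξ n⟫) :=
        by gcongr; exact iInf_le_sum_mul_of_mem_stdSimplex _ hl
    _ = ∑ n, l n * y n + ⟪p, x - ∑ n, l n • ξ n⟫ := by
        simp only [mul_sub, Finset.sum_sub_distrib, inner_sub_right, inner_sum,
          real_inner_smul_right]
        ring
    _ ≤ ∑ n, l n * y n + ‖p‖ * ‖x - ∑ n, l n • ξ n‖ :=
        by gcongr; exact real_inner_le_norm _ _
    _ ≤ ∑ n, l n * y n + L * ‖x - ∑ n, l n • ξ n‖ := by gcongr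

theorem exists_norm_le_le_inner_add_iInf [Nonempty ι] {L : ℝ} (hL : 0 ≤ L) (x : H) (ξ : ι → H)
    (y : ι → ℝ) {m : ℝ}
    (hm : ∀ l ∈ stdSimplex ℝ ι, m ≤ ∑ n, l n * y n + L * ‖x - ∑ n, l n • ξ n‖) :
    ∃ p : H, ‖p‖ ≤ L ∧ m ≤ ⟪p, x⟫ + ⨅ n, (y n - ⟪p, ξ n⟫) := by
  classical
  set T := Fintype.linearCombination ℝ fun n => (ξ n - x, y n - m)
  have hT : ∀ l ∈ stdSimplex ℝ ι, T l = (∑ n, l n • ξ n - x, ∑ n, l n * y n - m) := by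
    intro l hl
    ext <;> simp only [T, Fintype.linearCombination_apply, Prod.fst_sum, Prod.snd_sum,
      Prod.smul_fst, Prod.smul_snd, smul_sub, smul_eq_mul, mul_sub, Finset.sum_sub_distrib,
      ← Finset.sum_smul, ← Finset.sum_mul, hl.2, one_smul, one_mul]
  have hdisj : Disjoint {z : H × ℝ | z.2 + L * ‖z.1‖ < 0} (T '' stdSimplex ℝ ι) := by
    refine Set.disjoint_right.2 ?_
    rintro _ ⟨l, hl, rfl⟩
    simp only [hT l hl, Set.mem_ofPred_eq, norm_sub_rev _ x, not_lt]
    linarith [hm l hl]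
  obtain ⟨g, hgL, hg⟩ := exists_norm_le_forall_apply_le_of_disjoint hL
    ((convex_stdSimplex ℝ ι).linear_image T)
    ⟨_, _, single_mem_stdSimplex ℝ (Classical.arbitrary ι), rfl⟩ hdisj
  have := FiniteDimensional.span_of_finite ℝ (Set.finite_range fun n => ξ n - x)
  obtain ⟨p, hpg, hp⟩ := exists_norm_le_inner_eq_of_finiteDimensional g
    (Submodule.span ℝ (Set.range fun n => ξ n - x))
  refine ⟨p, hpg.trans hgL, le_add_of_sub_left_le (le_ciInf fun n => ?_)⟩
  have hvert := hg (T (Pi.single n 1)) ⟨_, single_mem_stdSimplex ℝ n, rfl⟩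
  rw [Fintype.linearCombination_apply_single, one_smul,
    ← hp _ (Submodule.subset_span ⟨n, rfl⟩), inner_sub_right] at hvert
  linarith

end InnerProduct

theorem primal_dual_reconstruction_eq_general
    {H : Type*} [NormedAddCommGroup H] [InnerProductSpace ℝ H]
    (L : ℝ) (hL : 0 ≤ L) (N : ℕ) (hN : 1 ≤ N) (ξ : Fin N → H) (y : Fin N → ℝ) :
    ∀ x : H,
      (⨅ l : stdSimplex ℝ (Fin N),
        (∑ n, l.1 n * y n + L * ‖x - ∑ n, l.1 n • ξ n‖))
      = ⨆ p : {p : H // ‖p‖ ≤ L},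
          (⟪p.1, x⟫ + ⨅ n : Fin N, (y n - ⟪p.1, ξ n⟫)) := by
  intro x
  have : Nonempty (Fin N) := ⟨⟨0, hN⟩⟩
  have : Nonempty {p : H // ‖p‖ ≤ L} := ⟨⟨0, by simpa using hL⟩⟩
  have hweak (p : {p : H // ‖p‖ ≤ L}) (l : stdSimplex ℝ (Fin N)) :=
    inner_add_iInf_le_sum_mul_add_mul_norm p.2 x ξ y l.2
  have hprimal_bdd : BddBelow (Set.range fun l : stdSimplex ℝ (Fin N) =>
      ∑ n, l.1 n * y n + L * ‖x - ∑ n, l.1 n • ξ n‖) :=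
    ⟨_, Set.forall_mem_range.2 (hweak (Classical.arbitrary _))⟩
  obtain ⟨p, hpL, hp⟩ := exists_norm_le_le_inner_add_iInf hL x ξ y
    fun l hl => ciInf_le hprimal_bdd ⟨l, hl⟩
  have hdual_bdd : BddAbove (Set.range fun p : {p : H // ‖p‖ ≤ L} =>
      ⟪p.1, x⟫ + ⨅ n, (y n - ⟪p.1, ξ n⟫)) :=
    ⟨_, Set.forall_mem_range.2 fun q => hweak q (Classical.arbitrary _)⟩
  exact le_antisymm (hp.trans (le_ciSup hdual_bdd ⟨p, hpL⟩))
    (ciSup_le fun p => le_ciInf (hweak p))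

/-- minimax duality between the primal and dual reconstruction
functionals. -/
theorem primal_dual_reconstruction_eq
    {H : Type*} [NormedAddCommGroup H] [InnerProductSpace ℝ H] [CompleteSpace H]
    (L : ℝ) (hL : 0 ≤ L) (N : ℕ) (hN : 1 ≤ N) (ξ : Fin N → H) (y : Fin N → ℝ) :
    ∀ x : H,
      (⨅ l : stdSimplex ℝ (Fin N),
        (∑ n, l.1 n * y n + L * ‖x - ∑ n, l.1 n • ξ n‖))
      = ⨆ p : {p : H // ‖p‖ ≤ L},
          (⟪p.1, x⟫ + ⨅ n : Fin N, (y n - ⟪p.1, ξ n⟫)) :=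
  primal_dual_reconstruction_eq_general L hL N hN ξ y
end

section
/- Let H be a real Hilbert space, let L ≥ 0, let N ≥ 1, let ξ_1, …, ξ_N ∈ H and y_1, …, y_N ∈ ℝ, and define f_N(x) = sup_{‖p‖ ≤ L} { ⟨p, x⟩ + min_{1 ≤ n ≤ N} ( y_n − ⟨p, ξ_n⟩ ) }. Then for every nonempty compact set K ⊆ H and every ε > 0, there exist a finite-dimensional linear subspace V ⊆ H and finitely many points p_1, …, p_M ∈ V with ‖p_m‖ ≤ L, such that the map f(x) = max_{1 ≤ m ≤ M} { ⟨p_m, x⟩ + min_{1 ≤ n ≤ N} ( y_n − ⟨p_m, ξ_n⟩ ) } is convex and L-Lipschitz on H and satisfies sup_{x ∈ K} | f_N(x) − f(x) | < ε, and moreover 0 ≤ f_N(x) − f(x) for every x ∈ K. -/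
open scoped RealInnerProductSpace

noncomputable def gfun {H : Type*} [NormedAddCommGroup H] [InnerProductSpace ℝ H]
    {N : ℕ} (ξ : Fin N → H) (y : Fin N → ℝ) (p x : H) : ℝ :=
  ⟪p, x⟫ + ⨅ n : Fin N, (y n - ⟪p, ξ n⟫)

lemma gfun_lip {H : Type*} [NormedAddCommGroup H] [InnerProductSpace ℝ H]
    {N : ℕ} (ξ : Fin N → H) (y : Fin N → ℝ) (p x z : H) :
    gfun ξ y p x ≤ gfun ξ y p z + ‖p‖ * ‖x - z‖ := by
  unfold gfun
  have h : ⟪p, x⟫ - ⟪p, z⟫ ≤ ‖p‖ * ‖x - z‖ := by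
    rw [← inner_sub_right]
    exact real_inner_le_norm p (x - z)
  linarith

lemma gfun_bdd {H : Type*} [NormedAddCommGroup H] [InnerProductSpace ℝ H]
    {N : ℕ} (ξ : Fin N → H) (y : Fin N → ℝ) {L : ℝ} (hL : 0 ≤ L) (hN : 1 ≤ N) (x : H) :
    BddAbove (Set.range fun p : {p : H // ‖p‖ ≤ L} => gfun ξ y p.1 x) := by
  refine ⟨L * ‖x‖ + (y ⟨0, hN⟩ + L * ‖ξ ⟨0, hN⟩‖), ?_⟩
  rintro _ ⟨p, rfl⟩
  dsimp only
  unfold gfun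
  have h1 : ⟪p.1, x⟫ ≤ ‖p.1‖ * ‖x‖ := real_inner_le_norm _ _
  have h2 : (⨅ n : Fin N, (y n - ⟪p.1, ξ n⟫)) ≤ y ⟨0, hN⟩ - ⟪p.1, ξ ⟨0, hN⟩⟫ :=
    ciInf_le (Finite.bddBelow_range _) _
  have h3 : |⟪p.1, ξ ⟨0, hN⟩⟫| ≤ ‖p.1‖ * ‖ξ ⟨0, hN⟩‖ := abs_real_inner_le_norm _ _
  have h4 : ‖p.1‖ ≤ L := p.2
  have h5 : (0:ℝ) ≤ ‖x‖ := norm_nonneg _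
  have h6 : (0:ℝ) ≤ ‖ξ ⟨0, hN⟩‖ := norm_nonneg _
  have h7 := abs_le.mp h3
  linarith [mul_le_mul_of_nonneg_right h4 h5, mul_le_mul_of_nonneg_right h4 h6, h7.1]

/-- discretized dual form of the reconstruction functional:
on any nonempty compact set it can be uniformly approximated from below, to
any accuracy, by a finite maximum over directions lying in a
finite-dimensional subspace, while preserving convexity and `L`-Lipschitzness. -/
theorem discretized_dual_reconstruction
    {H : Type*} [NormedAddCommGroup H] [InnerProductSpace ℝ H] [CompleteSpace H]
    (L : ℝ) (hL : 0 ≤ L) (N : ℕ) (hN : 1 ≤ N) (ξ : Fin N → H) (y : Fin N → ℝ)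
    (fN : H → ℝ)
    (hfN : ∀ x, fN x = ⨆ p : {p : H // ‖p‖ ≤ L},
      (⟪p.1, x⟫ + ⨅ n : Fin N, (y n - ⟪p.1, ξ n⟫)))
    (K : Set H) (hK : IsCompact K) (hKne : K.Nonempty)
    (ε : ℝ) (hε : 0 < ε) :
    ∃ (V : Submodule ℝ H) (_ : FiniteDimensional ℝ V) (M : ℕ) (p : Fin M → H)
      (f : H → ℝ),
      0 < M ∧
      (∀ m, p m ∈ V ∧ ‖p m‖ ≤ L) ∧
      (∀ x, f x = ⨆ m : Fin M,
        (⟪p m, x⟫ + ⨅ n : Fin N, (y n - ⟪p m, ξ n⟫))) ∧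
      (∀ x z : H, ∀ t : ℝ, 0 ≤ t → t ≤ 1 →
        f (t • x + (1 - t) • z) ≤ t * f x + (1 - t) * f z) ∧
      (∀ x z : H, |f x - f z| ≤ L * ‖x - z‖) ∧
      sSup ((fun x => |fN x - f x|) '' K) < ε ∧
      (∀ x ∈ K, 0 ≤ fN x - f x) := by
  classical
  have hNE : Nonempty {p : H // ‖p‖ ≤ L} := ⟨⟨0, by simp [hL]⟩⟩
  have hfN_eq : ∀ x, fN x = ⨆ p : {p : H // ‖p‖ ≤ L}, gfun ξ y p.1 x := hfN
  -- fN is L-Lipschitz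
  have hfN_lip : ∀ x z : H, fN x ≤ fN z + L * ‖x - z‖ := by
    intro x z
    rw [hfN_eq x]
    refine ciSup_le fun q => ?_
    have h1 := gfun_lip ξ y q.1 x z
    have h2 : gfun ξ y q.1 z ≤ fN z := by
      rw [hfN_eq z]; exact le_ciSup (gfun_bdd ξ y hL hN z) q
    have h3 : ‖q.1‖ * ‖x - z‖ ≤ L * ‖x - z‖ :=
      mul_le_mul_of_nonneg_right q.2 (norm_nonneg _)
    linarith
  set ε3 : ℝ := ε / 4 with hε3
  have hε3pos : 0 < ε3 := by positivity
  set δ : ℝ := ε3 / (L + 1) with hδ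
  have hδpos : 0 < δ := by positivity
  -- near optimizers
  have hchoice : ∀ c : H, ∃ p : H, ‖p‖ ≤ L ∧ fN c - ε3 < gfun ξ y p c := by
    intro c
    have hlt : fN c - ε3 < ⨆ p : {p : H // ‖p‖ ≤ L}, gfun ξ y p.1 c := by
      rw [← hfN_eq c]; linarith
    obtain ⟨q, hq⟩ := exists_lt_of_lt_ciSup hlt
    exact ⟨q.1, q.2, hq⟩
  choose q hq1 hq2 using hchoice
  -- finite net
  obtain ⟨t, htfin, htsub⟩ := (Metric.totallyBounded_iff.mp hK.totallyBounded) δ hδpos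
  have htne : t.Nonempty := by
    obtain ⟨x, hx⟩ := hKne
    obtain ⟨c, hc, -⟩ := Set.mem_iUnion₂.mp (htsub hx)
    exact ⟨c, hc⟩
  set s : Finset H := htfin.toFinset with hs
  have hsne : s.Nonempty := by
    obtain ⟨c, hc⟩ := htne
    exact ⟨c, htfin.mem_toFinset.mpr hc⟩
  set M : ℕ := s.card with hM
  have hMpos : 0 < M := Finset.card_pos.mpr hsne
  have : Nonempty (Fin M) := ⟨⟨0, hMpos⟩⟩
  set e : {x // x ∈ s} ≃ Fin M := s.equivFin with he
  set ctr : Fin M → H := fun m => (e.symm m : H) with hctr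
  set p : Fin M → H := fun m => q (ctr m) with hp
  set f : H → ℝ := fun x => ⨆ m : Fin M, gfun ξ y (p m) x with hf
  have hbdd : ∀ x : H, BddAbove (Set.range fun m : Fin M => gfun ξ y (p m) x) :=
    fun x => Finite.bddAbove_range _
  -- f ≤ fN
  have h_le : ∀ x, f x ≤ fN x := by
    intro x
    refine ciSup_le fun m => ?_
    rw [hfN_eq x]
    exact le_ciSup (gfun_bdd ξ y hL hN x) ⟨p m, hq1 _⟩
  -- f Lipschitz one-sided
  have hf_lip : ∀ x z : H, f x ≤ f z + L * ‖x - z‖ := by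
    intro x z
    refine ciSup_le fun m => ?_
    have h1 := gfun_lip ξ y (p m) x z
    have h2 : gfun ξ y (p m) z ≤ f z := le_ciSup (hbdd z) m
    have h3 : ‖p m‖ * ‖x - z‖ ≤ L * ‖x - z‖ :=
      mul_le_mul_of_nonneg_right (hq1 _) (norm_nonneg _)
    linarith
  -- lower bound on K
  have h_ge : ∀ x ∈ K, fN x - f x ≤ 3 * ε3 := by
    intro x hx
    obtain ⟨c, hct, hcb⟩ := Set.mem_iUnion₂.mp (htsub hx)
    set m : Fin M := e ⟨c, htfin.mem_toFinset.mpr hct⟩ with hm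
    have hcm : ctr m = c := by simp [hctr, hm]
    have hxc : ‖x - c‖ < δ := by
      rw [← dist_eq_norm]; exact Metric.mem_ball.mp hcb
    have h1 : gfun ξ y (p m) x ≤ f x := le_ciSup (hbdd x) m
    have h2 : gfun ξ y (p m) c ≤ gfun ξ y (p m) x + ‖p m‖ * ‖c - x‖ :=
      gfun_lip ξ y (p m) c x
    have h3 : fN c - ε3 < gfun ξ y (p m) c := by
      rw [hp]; dsimp only; rw [hcm]; exact hq2 c
    have h4 : fN x ≤ fN c + L * ‖x - c‖ := hfN_lip x c
    have h5 : ‖c - x‖ = ‖x - c‖ := norm_sub_rev c x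
    have h6 : ‖p m‖ * ‖c - x‖ ≤ L * ‖x - c‖ := by
      rw [h5]; exact mul_le_mul_of_nonneg_right (hq1 _) (norm_nonneg _)
    have h7 : L * ‖x - c‖ ≤ L * δ := mul_le_mul_of_nonneg_left hxc.le hL
    have h8 : L * δ ≤ ε3 := by
      have hL1 : (0:ℝ) < L + 1 := by linarith
      rw [hδ, ← mul_div_assoc, div_le_iff₀ hL1]
      nlinarith [hε3pos.le]
    linarith
  refine ⟨Submodule.span ℝ (Set.range p),
    FiniteDimensional.span_of_finite ℝ (Set.finite_range p), M, p, f, hMpos,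
    fun m => ⟨Submodule.subset_span (Set.mem_range_self m), hq1 _⟩,
    fun x => rfl, ?_, ?_, ?_, fun x hx => by linarith [h_le x]⟩
  · -- convexity
    intro x z tt ht0 ht1
    obtain ⟨m, hm⟩ := exists_eq_ciSup_of_finite
      (f := fun m : Fin M => gfun ξ y (p m) (tt • x + (1 - tt) • z))
    have hg : gfun ξ y (p m) (tt • x + (1 - tt) • z)
        = tt * gfun ξ y (p m) x + (1 - tt) * gfun ξ y (p m) z := by
      unfold gfun
      rw [inner_add_right, real_inner_smul_right, real_inner_smul_right]
      ring
    have h1 : gfun ξ y (p m) x ≤ f x := le_ciSup (hbdd x) m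
    have h2 : gfun ξ y (p m) z ≤ f z := le_ciSup (hbdd z) m
    have hfx : f (tt • x + (1 - tt) • z)
        = gfun ξ y (p m) (tt • x + (1 - tt) • z) := hm.symm
    rw [hfx, hg]
    have := mul_le_mul_of_nonneg_left h1 ht0
    have := mul_le_mul_of_nonneg_left h2 (by linarith : (0:ℝ) ≤ 1 - tt)
    linarith
  · -- Lipschitz
    intro x z
    rw [abs_sub_le_iff]
    constructor
    · linarith [hf_lip x z]
    · have := hf_lip z x
      rw [norm_sub_rev z x] at this
      linarith
  · -- sup bound
    have hle : sSup ((fun x => |fN x - f x|) '' K) ≤ 3 * ε3 := by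
      refine Real.sSup_le ?_ (by linarith)
      rintro v ⟨x, hx, rfl⟩
      dsimp only
      have h1 := h_ge x hx
      have h2 := h_le x
      rw [abs_of_nonneg (by linarith)]
      linarith
    have : 3 * ε3 < ε := by rw [hε3]; linarith
    linarith
end

section
/- Let H be a separable real Hilbert space, let C ⊆ H be compact and convex with diam(C) > 0, let L > 0, let ρ : C → ℝ be convex and L-Lipschitz, and let ε > 0. Then there exist N, M ∈ ℕ, points ξ_1, …, ξ_N ∈ C, a finite-dimensional linear subspace V ⊆ H, and points p_1, …, p_M ∈ V with ‖p_m‖ ≤ L for every m, such that the map f : H → ℝ defined by f(x) = max_{1 ≤ m ≤ M} { ⟨p_m, x⟩ + min_{1 ≤ n ≤ N} ( ρ(ξ_n) − ⟨p_m, ξ_n⟩ ) } is convex, L-Lipschitz on all of H, and satisfies sup_{ξ ∈ C} | ρ(ξ) − f(ξ) | < ε. -/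
/-!
Extend `ρ` from `C` to all of `H` by the infimal convolution `x ↦ inf_{y ∈ C} ρ y + L ‖x - y‖`,
which is convex and `L`-Lipschitz. Take a finite `ε / (4L)`-net `ξ` of `C` and let `V` be its span.
Restricted to `V`, the extension has at every node `ξ m` a subgradient `p m ∈ V` of norm at most `L`
(Hahn–Banach applied to its strict epigraph). The subgradient inequalities between the nodes force
the inner minimum to be attained at `n = m`, so the max-min formula interpolates `ρ` at the nodes;
being `L`-Lipschitz like `ρ`, it stays within `2L · ε / (4L) = ε / 2` of `ρ` on `C`.
-/

open Set
open scoped RealInnerProductSpace NNReal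

section InfConvolution

variable {E : Type*} [SeminormedAddCommGroup E] {C : Set E} {ρ : E → ℝ} {K : ℝ≥0}

noncomputable def infConvNorm (ρ : E → ℝ) (C : Set E) (K : ℝ≥0) (x : E) : ℝ :=
  ⨅ y : C, ρ y + K * ‖x - y‖

theorem LipschitzOnWith.bddBelow_range_add_mul_norm (hρ : LipschitzOnWith K ρ C) {y₀ : E}
    (hy₀ : y₀ ∈ C) (x : E) : BddBelow (range fun y : C => ρ y + K * ‖x - y‖) := by
  refine ⟨ρ y₀ - K * ‖x - y₀‖, ?_⟩
  rintro _ ⟨y, rfl⟩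
  have hρy := hρ.le_add_mul hy₀ y.2
  have htriangle : ‖y₀ - y‖ ≤ ‖x - y₀‖ + ‖x - y‖ := by
    simpa only [norm_sub_rev y₀ x] using norm_sub_le_norm_sub_add_norm_sub y₀ x y
  rw [dist_eq_norm] at hρy
  nlinarith [K.2]

theorem LipschitzOnWith.infConvNorm_le (hρ : LipschitzOnWith K ρ C) (x : E) {y : E} (hy : y ∈ C) :
    infConvNorm ρ C K x ≤ ρ y + K * ‖x - y‖ :=
  ciInf_le (hρ.bddBelow_range_add_mul_norm hy x) ⟨y, hy⟩

theorem LipschitzOnWith.eqOn_infConvNorm (hρ : LipschitzOnWith K ρ C) :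
    EqOn (infConvNorm ρ C K) ρ C := by
  intro x hx
  have : Nonempty C := ⟨⟨x, hx⟩⟩
  refine le_antisymm (by simpa using hρ.infConvNorm_le x hx) (le_ciInf fun y => ?_)
  simpa only [dist_eq_norm] using hρ.le_add_mul hx y.2

theorem LipschitzOnWith.lipschitzWith_infConvNorm (hρ : LipschitzOnWith K ρ C)
    (hC : C.Nonempty) : LipschitzWith K (infConvNorm ρ C K) := by
  have := hC.to_subtype
  refine LipschitzWith.of_le_add_mul K fun x x' => ?_
  rw [← sub_le_iff_le_add]
  refine le_ciInf fun y => ?_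
  have hx := hρ.infConvNorm_le x y.2
  have htriangle := norm_sub_le_norm_sub_add_norm_sub x x' (y : E)
  rw [dist_eq_norm]
  nlinarith [K.2]

theorem ConvexOn.convexOn_infConvNorm [NormedSpace ℝ E] (hconv : ConvexOn ℝ C ρ)
    (hlip : LipschitzOnWith K ρ C) (hC : C.Nonempty) : ConvexOn ℝ univ (infConvNorm ρ C K) := by
  have := hC.to_subtype
  refine ⟨convex_univ, fun x _ z _ a b ha hb hab => ?_⟩
  have hxa : a * infConvNorm ρ C K x = ⨅ y : C, a * (ρ y + K * ‖x - y‖) :=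
    Real.mul_iInf_of_nonneg ha _
  have hzb : b * infConvNorm ρ C K z = ⨅ y : C, b * (ρ y + K * ‖z - y‖) :=
    Real.mul_iInf_of_nonneg hb _
  rw [smul_eq_mul, smul_eq_mul, hxa, hzb]
  refine le_ciInf_add_ciInf fun y₁ y₂ => ?_
  have hdist : ‖a • x + b • z - (a • (y₁ : E) + b • (y₂ : E))‖ ≤ a * ‖x - y₁‖ + b * ‖z - y₂‖ := by
    rw [show a • x + b • z - (a • (y₁ : E) + b • (y₂ : E)) = a • (x - y₁) + b • (z - y₂) by module]
    exact convexOn_univ_norm.2 (mem_univ _) (mem_univ _) ha hb hab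
  calc infConvNorm ρ C K (a • x + b • z)
      ≤ ρ (a • y₁ + b • y₂) + K * ‖a • x + b • z - (a • (y₁ : E) + b • (y₂ : E))‖ :=
        hlip.infConvNorm_le _ (hconv.1 y₁.2 y₂.2 ha hb hab)
    _ ≤ (a * ρ y₁ + b * ρ y₂) + K * (a * ‖x - y₁‖ + b * ‖z - y₂‖) := by
        gcongr
        exact hconv.2 y₁.2 y₂.2 ha hb hab
    _ = a * (ρ y₁ + K * ‖x - y₁‖) + b * (ρ y₂ + K * ‖z - y₂‖) := by ring

end InfConvolution

section Subgradient

variable {E : Type*} [NormedAddCommGroup E] [NormedSpace ℝ E] {g : E → ℝ}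

theorem ConvexOn.exists_continuousLinearMap_le (hg : ConvexOn ℝ univ g) (hcont : Continuous g)
    (x₀ : E) : ∃ φ : E →L[ℝ] ℝ, ∀ x, g x₀ + φ (x - x₀) ≤ g x := by
  set S := {q : E × ℝ | g q.1 < q.2}
  have hS_convex : Convex ℝ S := by simpa using hg.convex_strict_epigraph
  have hS_open : IsOpen S := isOpen_lt (hcont.comp continuous_fst) continuous_snd
  obtain ⟨Φ, hΦ⟩ := geometric_hahn_banach_open_point hS_convex hS_open
    (by simp [S] : (x₀, g x₀) ∉ S)
  set ψ := Φ.comp (ContinuousLinearMap.inl ℝ E ℝ)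
  set c := Φ (0, 1)
  have hΦ_apply (x : E) (t : ℝ) : Φ (x, t) = ψ x + t * c := by
    have hsplit : ((x, t) : E × ℝ) = (x, 0) + t • (0, 1) := by simp
    rw [hsplit, map_add, map_smul, smul_eq_mul]
    rfl
  have hc : c < 0 := by
    have := hΦ (x₀, g x₀ + 1) (by simp [S])
    rw [hΦ_apply, hΦ_apply] at this
    linarith
  refine ⟨(-c)⁻¹ • ψ, fun x => le_of_forall_gt_imp_ge_of_dense fun t ht => ?_⟩
  have hsep := hΦ (x, t) ht
  rw [hΦ_apply, hΦ_apply] at hsep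
  have hψ : (-c)⁻¹ * (ψ x - ψ x₀) ≤ t - g x₀ := by
    rw [inv_mul_le_iff₀ (neg_pos.2 hc)]
    linarith
  change g x₀ + (-c)⁻¹ * ψ (x - x₀) ≤ t
  rw [map_sub]
  linarith

theorem ConvexOn.exists_continuousLinearMap_le_of_lipschitzWith {K : ℝ≥0}
    (hg : ConvexOn ℝ univ g) (hlip : LipschitzWith K g) (x₀ : E) :
    ∃ φ : E →L[ℝ] ℝ, ‖φ‖ ≤ K ∧ ∀ x, g x₀ + φ (x - x₀) ≤ g x := by
  obtain ⟨φ, hφ⟩ := hg.exists_continuousLinearMap_le hlip.continuous x₀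
  have hφK (v : E) : φ v ≤ K * ‖v‖ := by
    have hsub := hφ (x₀ + v)
    have hlipv := hlip.le_add_mul (x₀ + v) x₀
    rw [add_sub_cancel_left] at hsub
    rw [dist_self_add_left] at hlipv
    linarith
  refine ⟨φ, φ.opNorm_le_bound K.2 fun v => abs_le.2 ⟨?_, hφK v⟩, hφ⟩
  have := hφK (-v)
  rw [map_neg, norm_neg] at this
  linarith

end Subgradient

section InnerSubgradient

variable {E : Type*} [NormedAddCommGroup E] [InnerProductSpace ℝ E] {K : ℝ≥0}

theorem ConvexOn.exists_inner_le_of_lipschitzWith [CompleteSpace E] {g : E → ℝ}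
    (hg : ConvexOn ℝ univ g) (hlip : LipschitzWith K g) (x₀ : E) :
    ∃ p : E, ‖p‖ ≤ K ∧ ∀ x, g x₀ + ⟪p, x - x₀⟫ ≤ g x := by
  obtain ⟨φ, hφK, hφ⟩ := hg.exists_continuousLinearMap_le_of_lipschitzWith hlip x₀
  exact ⟨(InnerProductSpace.toDual ℝ E).symm φ, by simpa using hφK, fun x => by simpa using hφ x⟩

theorem ConvexOn.exists_mem_submodule_inner_le (V : Submodule ℝ E) [CompleteSpace V] {g : E → ℝ}
    (hg : ConvexOn ℝ univ g) (hlip : LipschitzWith K g) {x₀ : E} (hx₀ : x₀ ∈ V) :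
    ∃ p ∈ V, ‖p‖ ≤ K ∧ ∀ x ∈ V, g x₀ + ⟪p, x - x₀⟫ ≤ g x := by
  have hgV : ConvexOn ℝ univ (g ∘ V.subtype) := by
    simpa using hg.comp_linearMap V.subtype
  have hlipV : LipschitzWith K (g ∘ V.subtype) :=
    LipschitzWith.of_dist_le_mul fun x y => hlip.dist_le_mul x y
  obtain ⟨p, hpK, hp⟩ := hgV.exists_inner_le_of_lipschitzWith hlipV ⟨x₀, hx₀⟩
  exact ⟨p, p.2, hpK, fun x hx => hp ⟨x, hx⟩⟩

theorem ConvexOn.exists_mem_submodule_inner_le_of_lipschitzOnWith {C : Set E} {ρ : E → ℝ}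
    (hconv : ConvexOn ℝ C ρ) (hlip : LipschitzOnWith K ρ C) (V : Submodule ℝ E) [CompleteSpace V]
    {x₀ : E} (hx₀C : x₀ ∈ C) (hx₀V : x₀ ∈ V) :
    ∃ p ∈ V, ‖p‖ ≤ K ∧ ∀ x ∈ C ∩ V, ρ x₀ + ⟪p, x - x₀⟫ ≤ ρ x := by
  -- At boundary points of `C`, subgradients of `ρ` itself may have norm larger than `K`; those of
  -- its `K`-Lipschitz extension cannot.
  obtain ⟨p, hpV, hpK, hp⟩ :=
    (hconv.convexOn_infConvNorm hlip ⟨x₀, hx₀C⟩).exists_mem_submodule_inner_le V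
      (hlip.lipschitzWith_infConvNorm ⟨x₀, hx₀C⟩) hx₀V
  refine ⟨p, hpV, hpK, fun x hx => ?_⟩
  simpa only [hlip.eqOn_infConvNorm hx₀C, hlip.eqOn_infConvNorm hx.1] using hp x hx.2

end InnerSubgradient

theorem LipschitzOnWith.abs_sub_le_of_forall_eq_of_subset_iUnion_ball {α ι : Type*}
    [PseudoMetricSpace α] {f g : α → ℝ} {K : ℝ≥0} {C : Set α} {ξ : ι → α} {δ : ℝ}
    (hf : LipschitzOnWith K f C) (hg : LipschitzOnWith K g C) (hfg : ∀ i, f (ξ i) = g (ξ i))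
    (hξC : ∀ i, ξ i ∈ C) (hcover : C ⊆ ⋃ i, Metric.ball (ξ i) δ) {x : α} (hx : x ∈ C) :
    |f x - g x| ≤ 2 * K * δ := by
  obtain ⟨i, hxi⟩ := mem_iUnion.1 (hcover hx)
  rw [Metric.mem_ball] at hxi
  calc |f x - g x| = dist (f x) (g x) := (Real.dist_eq _ _).symm
    _ ≤ dist (f x) (f (ξ i)) + dist (g (ξ i)) (g x) := by rw [hfg i]; exact dist_triangle _ _ _
    _ ≤ K * dist x (ξ i) + K * dist (ξ i) x :=
        add_le_add (hf.dist_le_mul x hx _ (hξC i)) (hg.dist_le_mul _ (hξC i) x hx)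
    _ ≤ 2 * K * δ := by rw [dist_comm (ξ i) x]; nlinarith [K.2]

section MaxAffine

variable {E : Type*} [NormedAddCommGroup E] [InnerProductSpace ℝ E] {ι : Type*} [Finite ι]

theorem convexOn_iSup_inner_add [Nonempty ι] (p : ι → E) (c : ι → ℝ) :
    ConvexOn ℝ univ fun x => ⨆ i, (⟪p i, x⟫ + c i) := by
  refine ⟨convex_univ, fun x _ z _ a b ha hb hab => ?_⟩
  simp only [smul_eq_mul]
  refine ciSup_le fun i => ?_
  calc ⟪p i, a • x + b • z⟫ + c i = a * (⟪p i, x⟫ + c i) + b * (⟪p i, z⟫ + c i) := by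
        rw [inner_add_right, real_inner_smul_right, real_inner_smul_right]
        linear_combination (-c i) * hab
    _ ≤ a * (⨆ i, (⟪p i, x⟫ + c i)) + b * ⨆ i, (⟪p i, z⟫ + c i) := by
        gcongr <;> exact le_ciSup (f := fun i => ⟪p i, _⟫ + c i) (Finite.bddAbove_range _) i

theorem lipschitzWith_iSup_inner_add [Nonempty ι] {K : ℝ≥0} {p : ι → E} (hp : ∀ i, ‖p i‖ ≤ K)
    (c : ι → ℝ) : LipschitzWith K fun x => ⨆ i, (⟪p i, x⟫ + c i) := by
  refine LipschitzWith.of_le_add_mul K fun x y => ciSup_le fun i => ?_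
  have hinner : ⟪p i, x - y⟫ ≤ K * dist x y := by
    rw [dist_eq_norm]
    exact (real_inner_le_norm _ _).trans (by gcongr; exact hp i)
  have hy : ⟪p i, y⟫ + c i ≤ ⨆ i, (⟪p i, y⟫ + c i) :=
    le_ciSup (f := fun i => ⟪p i, y⟫ + c i) (Finite.bddAbove_range _) i
  rw [inner_sub_right] at hinner
  linarith

theorem iSup_inner_add_iInf_eq_of_le {ρ : E → ℝ} {ξ p : ι → E}
    (hp : ∀ m n, ρ (ξ m) + ⟪p m, ξ n - ξ m⟫ ≤ ρ (ξ n)) (k : ι) :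
    ⨆ m, (⟪p m, ξ k⟫ + ⨅ n, (ρ (ξ n) - ⟪p m, ξ n⟫)) = ρ (ξ k) := by
  have : Nonempty ι := ⟨k⟩
  refine le_antisymm (ciSup_le fun m => ?_) (le_ciSup_of_le (Finite.bddAbove_range _) k ?_)
  · have := ciInf_le (Finite.bddBelow_range fun n => ρ (ξ n) - ⟪p m, ξ n⟫) k
    linarith
  · refine le_add_of_sub_left_le (le_ciInf fun n => ?_)
    have := hp k n
    rw [inner_sub_right] at this
    linarith

theorem LipschitzOnWith.abs_sub_iSup_inner_add_iInf_le {C : Set E} {ρ : E → ℝ} {K : ℝ≥0} {δ : ℝ}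
    {ξ p : ι → E} (hρ : LipschitzOnWith K ρ C) (hpK : ∀ m, ‖p m‖ ≤ K)
    (hp : ∀ m n, ρ (ξ m) + ⟪p m, ξ n - ξ m⟫ ≤ ρ (ξ n)) (hξC : ∀ n, ξ n ∈ C)
    (hcover : C ⊆ ⋃ n, Metric.ball (ξ n) δ) {x : E} (hx : x ∈ C) :
    |ρ x - ⨆ m, (⟪p m, x⟫ + ⨅ n, (ρ (ξ n) - ⟪p m, ξ n⟫))| ≤ 2 * K * δ := by
  obtain ⟨i, -⟩ := mem_iUnion.1 (hcover hx)
  have : Nonempty ι := ⟨i⟩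
  exact hρ.abs_sub_le_of_forall_eq_of_subset_iUnion_ball
    (lipschitzWith_iSup_inner_add hpK _).lipschitzOnWith
    (fun k => (iSup_inner_add_iInf_eq_of_le hp k).symm) hξC hcover hx

end MaxAffine

theorem convex_functional_reconstruction_general
    {H : Type*} [NormedAddCommGroup H] [InnerProductSpace ℝ H]
    (C : Set H) (hCcpt : IsCompact C) (hCconv : Convex ℝ C)
    (hCdiam : 0 < Metric.diam C)
    (L : ℝ) (hL : 0 < L) (ρ : H → ℝ)
    (hρconv : ∀ x ∈ C, ∀ y ∈ C, ∀ t : ℝ, 0 ≤ t → t ≤ 1 →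
      ρ (t • x + (1 - t) • y) ≤ t * ρ x + (1 - t) * ρ y)
    (hρlip : ∀ x ∈ C, ∀ y ∈ C, |ρ x - ρ y| ≤ L * ‖x - y‖)
    (ε : ℝ) (hε : 0 < ε) :
    ∃ (N M : ℕ) (ξ : Fin N → H) (V : Submodule ℝ H)
      (_ : FiniteDimensional ℝ V) (p : Fin M → H) (f : H → ℝ),
      0 < N ∧ 0 < M ∧
      (∀ n, ξ n ∈ C) ∧
      (∀ m, p m ∈ V ∧ ‖p m‖ ≤ L) ∧
      (∀ x, f x = ⨆ m : Fin M,
        (⟪p m, x⟫ + ⨅ n : Fin N, (ρ (ξ n) - ⟪p m, ξ n⟫))) ∧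
      (∀ x z : H, ∀ t : ℝ, 0 ≤ t → t ≤ 1 →
        f (t • x + (1 - t) • z) ≤ t * f x + (1 - t) * f z) ∧
      (∀ x z : H, |f x - f z| ≤ L * ‖x - z‖) ∧
      sSup ((fun x => |ρ x - f x|) '' C) < ε := by
  obtain ⟨x₀, hx₀⟩ : C.Nonempty := nonempty_iff_ne_empty.2 fun h => by simp [h] at hCdiam
  set K : ℝ≥0 := ⟨L, hL.le⟩
  have hK : (K : ℝ) = L := rfl
  have hρK : LipschitzOnWith K ρ C := .of_dist_le_mul fun x hx y hy => by
    rw [Real.dist_eq, dist_eq_norm]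
    exact hρlip x hx y hy
  have hρC : ConvexOn ℝ C ρ := ⟨hCconv, fun x hx y hy a b ha hb hab => by
    obtain rfl : b = 1 - a := by linarith
    exact hρconv x hx y hy a ha (by linarith)⟩
  obtain ⟨t, htC, htfin, hcover⟩ := hCcpt.finite_cover_balls (e := ε / (4 * L)) (by positivity)
  obtain ⟨N, ξ, rfl⟩ := htfin.fin_embedding
  rw [biUnion_range] at hcover
  have hξC (n : Fin N) : ξ n ∈ C := htC (mem_range_self n)
  obtain ⟨n₀, -⟩ := mem_iUnion.1 (hcover hx₀)
  have : Nonempty (Fin N) := ⟨n₀⟩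
  set V := Submodule.span ℝ (range ξ)
  have : FiniteDimensional ℝ V := .span_of_finite ℝ (finite_range ξ)
  have hξV (n : Fin N) : ξ n ∈ V := Submodule.subset_span (mem_range_self n)
  choose p hpV hpK hp using fun m =>
    hρC.exists_mem_submodule_inner_le_of_lipschitzOnWith hρK V (hξC m) (hξV m)
  have hp_nodes (m n : Fin N) : ρ (ξ m) + ⟪p m, ξ n - ξ m⟫ ≤ ρ (ξ n) := hp m _ ⟨hξC n, hξV n⟩
  set c : Fin N → ℝ := fun m => ⨅ n, (ρ (ξ n) - ⟪p m, ξ n⟫)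
  refine ⟨N, N, ξ, V, inferInstance, p, fun x => ⨆ m, (⟪p m, x⟫ + c m), n₀.pos, n₀.pos, hξC,
    fun m => ⟨hpV m, hpK m⟩, fun x => rfl, fun x z s hs₀ hs₁ => ?_, fun x z => ?_, ?_⟩
  · simpa using (convexOn_iSup_inner_add p c).2 (mem_univ x) (mem_univ z) hs₀ (by linarith)
      (by ring)
  · have := (lipschitzWith_iSup_inner_add (K := K) hpK c).dist_le_mul x z
    rwa [Real.dist_eq, dist_eq_norm] at this
  · refine (Real.sSup_le (a := ε / 2) ?_ (by positivity)).trans_lt (by linarith)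
    rintro _ ⟨x, hx, rfl⟩
    calc _ ≤ 2 * K * (ε / (4 * L)) :=
          hρK.abs_sub_iSup_inner_add_iInf_le hpK hp_nodes hξC hcover hx
      _ = ε / 2 := by rw [hK]; field_simp; ring

/-- reconstruction theorem.  Every convex `L`-Lipschitz
functional on a compact convex subset of a separable real Hilbert space can be
uniformly `ε`-approximated by an explicit finite max-min formula which is
convex and `L`-Lipschitz on all of `H`, built from finitely many sample points
in `C` and finitely many directions in a finite-dimensional subspace with
norms at most `L`. -/
theorem convex_functional_reconstruction
    {H : Type*} [NormedAddCommGroup H] [InnerProductSpace ℝ H] [CompleteSpace H]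
    [TopologicalSpace.SeparableSpace H]
    (C : Set H) (hCcpt : IsCompact C) (hCconv : Convex ℝ C)
    (hCdiam : 0 < Metric.diam C)
    (L : ℝ) (hL : 0 < L) (ρ : H → ℝ)
    (hρconv : ∀ x ∈ C, ∀ y ∈ C, ∀ t : ℝ, 0 ≤ t → t ≤ 1 →
      ρ (t • x + (1 - t) • y) ≤ t * ρ x + (1 - t) * ρ y)
    (hρlip : ∀ x ∈ C, ∀ y ∈ C, |ρ x - ρ y| ≤ L * ‖x - y‖)
    (ε : ℝ) (hε : 0 < ε) :
    ∃ (N M : ℕ) (ξ : Fin N → H) (V : Submodule ℝ H)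
      (_ : FiniteDimensional ℝ V) (p : Fin M → H) (f : H → ℝ),
      0 < N ∧ 0 < M ∧
      (∀ n, ξ n ∈ C) ∧
      (∀ m, p m ∈ V ∧ ‖p m‖ ≤ L) ∧
      (∀ x, f x = ⨆ m : Fin M,
        (⟪p m, x⟫ + ⨅ n : Fin N, (ρ (ξ n) - ⟪p m, ξ n⟫))) ∧
      (∀ x z : H, ∀ t : ℝ, 0 ≤ t → t ≤ 1 →
        f (t • x + (1 - t) • z) ≤ t * f x + (1 - t) * f z) ∧
      (∀ x z : H, |f x - f z| ≤ L * ‖x - z‖) ∧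
      sSup ((fun x => |ρ x - f x|) '' C) < ε :=
  convex_functional_reconstruction_general C hCcpt hCconv hCdiam L hL ρ hρconv hρlip ε hε
end

section
/- Let H be a separable real Hilbert space, let C ⊆ H be compact and convex, let L > 0, let ρ : C → ℝ be convex and L-Lipschitz, let ξ_1, …, ξ_N ∈ C with y_n = ρ(ξ_n), and let ε > 0. Then there exist M ∈ ℕ and points p_1, …, p_M ∈ H with ‖p_m‖ ≤ L for every m, such that the map f : H → ℝ defined by f(x) = max_{1 ≤ m ≤ M} { ⟨p_m, x⟩ + min_{1 ≤ n ≤ N} ( y_n − ⟨p_m, ξ_n⟩ ) } is convex, L-Lipschitz on H, and satisfies max_{1 ≤ n ≤ N} | ρ(ξ_n) − f(ξ_n) | < ε. Moreover, if {ξ_n}_{n=1}^N is an ε/(4L)-net of C and the sample accuracy is ε/2 (i.e. max_n |ρ(ξ_n) − f(ξ_n)| < ε/2), then sup_{ξ ∈ C} | ρ(ξ) − f(ξ) | < ε. -/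
/-! At each sample `ξ k` the function `ρ` has a subgradient `p k` with `‖p k‖ ≤ L`: separate
`(ξ k, ρ (ξ k))` from the open convex strict epigraph of the McShane extension
`x ↦ inf_{z ∈ C} ρ z + L ‖x - z‖`, which is convex and `L`-Lipschitz on all of `H` and agrees with
`ρ` on `C`. The maximum of the affine minorants `x ↦ ⟪p k, x⟫ + min_n (y n - ⟪p k, ξ n⟫)` is then
convex, `L`-Lipschitz and interpolates the samples exactly, and on an `ε/(4L)`-net the uniform
bound follows from the triangle inequality. -/

open scoped RealInnerProductSpace NNReal

section Subgradient

variable {E : Type*} [SeminormedAddCommGroup E]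

/-- The strict epigraph of the McShane extension `x ↦ ⨅ z ∈ s, f z + K * ‖x - z‖` of `f`,
described without the infimum. -/
def mcShaneStrictEpigraph (s : Set E) (f : E → ℝ) (K : ℝ≥0) : Set (E × ℝ) :=
  {q | ∃ z ∈ s, f z + K * ‖q.1 - z‖ < q.2}

theorem isOpen_mcShaneStrictEpigraph (s : Set E) (f : E → ℝ) (K : ℝ≥0) :
    IsOpen (mcShaneStrictEpigraph s f K) := by
  have : mcShaneStrictEpigraph s f K = ⋃ z ∈ s, {q : E × ℝ | f z + K * ‖q.1 - z‖ < q.2} := by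
    ext q; simp [mcShaneStrictEpigraph]
  rw [this]
  exact isOpen_biUnion fun z _ => isOpen_lt (by fun_prop) continuous_snd

theorem LipschitzOnWith.notMem_mcShaneStrictEpigraph {s : Set E} {f : E → ℝ} {K : ℝ≥0}
    (hf : LipschitzOnWith K f s) {a : E} (ha : a ∈ s) : (a, f a) ∉ mcShaneStrictEpigraph s f K := by
  rintro ⟨z, hz, h⟩
  have := hf.le_add_mul ha hz
  rw [dist_eq_norm] at this
  exact lt_irrefl _ (this.trans_lt h)

variable [NormedSpace ℝ E]

theorem convex_mcShaneStrictEpigraph {s : Set E} {f : E → ℝ} (hf : ConvexOn ℝ s f) (K : ℝ≥0) :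
    Convex ℝ (mcShaneStrictEpigraph s f K) := by
  rintro ⟨x₁, t₁⟩ ⟨z₁, hz₁, h₁⟩ ⟨x₂, t₂⟩ ⟨z₂, hz₂, h₂⟩ a b ha hb hab
  refine ⟨a • z₁ + b • z₂, hf.1 hz₁ hz₂ ha hb hab, ?_⟩
  have hfz : f (a • z₁ + b • z₂) ≤ a * f z₁ + b * f z₂ := hf.2 hz₁ hz₂ ha hb hab
  have hnorm : ‖(a • x₁ + b • x₂) - (a • z₁ + b • z₂)‖ ≤ a * ‖x₁ - z₁‖ + b * ‖x₂ - z₂‖ := by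
    calc ‖(a • x₁ + b • x₂) - (a • z₁ + b • z₂)‖ = ‖a • (x₁ - z₁) + b • (x₂ - z₂)‖ := by
          congr 1; module
      _ ≤ a * ‖x₁ - z₁‖ + b * ‖x₂ - z₂‖ := by
          refine (norm_add_le _ _).trans_eq ?_
          rw [norm_smul_of_nonneg ha, norm_smul_of_nonneg hb]
  simp only [Prod.fst_add, Prod.snd_add, Prod.smul_fst, Prod.smul_snd, smul_eq_mul] at h₁ h₂ ⊢
  have hK : (K : ℝ) * ‖(a • x₁ + b • x₂) - (a • z₁ + b • z₂)‖
      ≤ K * (a * ‖x₁ - z₁‖ + b * ‖x₂ - z₂‖) := by gcongr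
  obtain ha' | hb' : 0 < a ∨ 0 < b := by
    rcases ha.eq_or_lt with rfl | ha'
    · right; linarith
    · left; exact ha'
  · nlinarith [mul_pos ha' (sub_pos.2 h₁), mul_nonneg hb (sub_pos.2 h₂).le]
  · nlinarith [mul_nonneg ha (sub_pos.2 h₁).le, mul_pos hb' (sub_pos.2 h₂)]

theorem exists_strongDual_add_lt_of_isOpen_of_convex {S : Set (E × ℝ)} (hSo : IsOpen S)
    (hSc : Convex ℝ S) {a : E} {c c' : ℝ} (hc : c < c') (hac : (a, c) ∉ S) (hac' : (a, c') ∈ S) :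
    ∃ φ : StrongDual ℝ E, ∀ q ∈ S, c + φ (q.1 - a) < q.2 := by
  obtain ⟨g, hg⟩ := geometric_hahn_banach_point_open hSc hSo hac
  set ℓ := g.comp (ContinuousLinearMap.inl ℝ E ℝ)
  set σ := g (0, 1)
  have hg_apply : ∀ x t, g (x, t) = ℓ x + t * σ := fun x t => by
    rw [show ((x, t) : E × ℝ) = (x, 0) + t • (0, 1) by simp, map_add, map_smul, smul_eq_mul]
    rfl
  have hσ : 0 < σ := by
    have := hg _ hac'
    rw [hg_apply, hg_apply] at this
    nlinarith
  refine ⟨-σ⁻¹ • ℓ, fun ⟨x, t⟩ hq => ?_⟩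
  have := hg _ hq
  rw [hg_apply, hg_apply] at this
  have key : σ⁻¹ * (ℓ a - ℓ x) < t - c := by
    rw [inv_mul_lt_iff₀ hσ]; linarith
  change c + -σ⁻¹ * ℓ (x - a) < t
  rw [map_sub]
  linarith

theorem ConvexOn.exists_strongDual_le_of_lipschitzOnWith {s : Set E} {f : E → ℝ} {K : ℝ≥0}
    (hf : ConvexOn ℝ s f) (hlip : LipschitzOnWith K f s) {a : E} (ha : a ∈ s) :
    ∃ φ : StrongDual ℝ E, ‖φ‖ ≤ K ∧ ∀ x ∈ s, f a + φ (x - a) ≤ f x := by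
  obtain ⟨φ, hφ⟩ := exists_strongDual_add_lt_of_isOpen_of_convex
    (isOpen_mcShaneStrictEpigraph s f K) (convex_mcShaneStrictEpigraph hf K) (lt_add_one (f a))
    (hlip.notMem_mcShaneStrictEpigraph ha) ⟨a, ha, by simp⟩
  have below : ∀ x, ∀ z ∈ s, f a + φ (x - a) ≤ f z + K * ‖x - z‖ := fun x z hz =>
    le_of_forall_gt fun t ht => hφ (x, t) ⟨z, hz, ht⟩
  refine ⟨φ, φ.opNorm_le_bound K.2 fun v => ?_, fun x hx => by simpa using below x x hx⟩
  have h₁ := below (a + v) a ha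
  have h₂ := below (a - v) a ha
  simp only [add_sub_cancel_left, sub_sub_cancel_left, map_neg, norm_neg] at h₁ h₂
  rw [Real.norm_eq_abs, abs_le]
  constructor <;> linarith

end Subgradient

theorem ConvexOn.exists_inner_le_of_lipschitzOnWith {H : Type*} [NormedAddCommGroup H]
    [InnerProductSpace ℝ H] [CompleteSpace H] {s : Set H} {f : H → ℝ} {K : ℝ≥0}
    (hf : ConvexOn ℝ s f) (hlip : LipschitzOnWith K f s) {a : H} (ha : a ∈ s) :
    ∃ p : H, ‖p‖ ≤ K ∧ ∀ x ∈ s, f a + ⟪p, x - a⟫ ≤ f x := by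
  obtain ⟨φ, hφ, hsub⟩ := hf.exists_strongDual_le_of_lipschitzOnWith hlip ha
  exact ⟨(InnerProductSpace.toDual ℝ H).symm φ, by simpa using hφ,
    by simpa [InnerProductSpace.toDual_symm_apply] using hsub⟩

section MaxAffine

variable {H ι : Type*} [SeminormedAddCommGroup H] [InnerProductSpace ℝ H]

noncomputable def maxAffine (p : ι → H) (c : ι → ℝ) (x : H) : ℝ :=
  ⨆ m, ⟪p m, x⟫ + c m

variable [Finite ι] (p : ι → H) (c : ι → ℝ)

theorem le_maxAffine (x : H) (m : ι) : ⟪p m, x⟫ + c m ≤ maxAffine p c x :=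
  le_ciSup (f := fun m => ⟪p m, x⟫ + c m) (Set.finite_range _).bddAbove m

variable [Nonempty ι]

theorem maxAffine_le_iff {x : H} {r : ℝ} : maxAffine p c x ≤ r ↔ ∀ m, ⟪p m, x⟫ + c m ≤ r :=
  ciSup_le_iff (Set.finite_range _).bddAbove

theorem convexOn_maxAffine : ConvexOn ℝ Set.univ (maxAffine p c) := by
  refine ⟨convex_univ, fun x _ z _ a b ha hb hab => (maxAffine_le_iff p c).2 fun m => ?_⟩
  calc ⟪p m, a • x + b • z⟫ + c m = a * (⟪p m, x⟫ + c m) + b * (⟪p m, z⟫ + c m) := by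
        rw [inner_add_right, real_inner_smul_right, real_inner_smul_right]
        linear_combination (-c m) * hab
    _ ≤ a • maxAffine p c x + b • maxAffine p c z := by
        simp only [smul_eq_mul]; gcongr <;> exact le_maxAffine p c _ m

theorem lipschitzWith_maxAffine {K : ℝ≥0} (hp : ∀ m, ‖p m‖ ≤ K) :
    LipschitzWith K (maxAffine p c) :=
  LipschitzWith.of_le_add_mul K fun x z => (maxAffine_le_iff p c).2 fun m =>
    calc ⟪p m, x⟫ + c m = (⟪p m, z⟫ + c m) + ⟪p m, x - z⟫ := by rw [inner_sub_right]; ring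
      _ ≤ maxAffine p c z + K * dist x z := by
        gcongr
        · exact le_maxAffine p c z m
        · rw [dist_eq_norm]
          exact (real_inner_le_norm _ _).trans (by gcongr; exact hp m)

theorem maxAffine_apply_of_subgradient {ξ : ι → H} {y : ι → ℝ}
    (hsub : ∀ m n, y m + ⟪p m, ξ n - ξ m⟫ ≤ y n) (k : ι) :
    maxAffine p (fun m => ⨅ n, y n - ⟪p m, ξ n⟫) (ξ k) = y k := by
  refine le_antisymm ((maxAffine_le_iff _ _).2 fun m => ?_) ?_
  · have := ciInf_le (Set.finite_range fun n => y n - ⟪p m, ξ n⟫).bddBelow k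
    linarith
  · have : y k - ⟪p k, ξ k⟫ ≤ ⨅ n, y n - ⟪p k, ξ n⟫ := le_ciInf fun n => by
      have := hsub k n
      rw [inner_sub_right] at this
      linarith
    have := le_maxAffine p (fun m => ⨅ n, y n - ⟪p m, ξ n⟫) (ξ k) k
    linarith

end MaxAffine

theorem abs_sub_lt_of_lipschitzOnWith {E : Type*} [SeminormedAddCommGroup E] {s : Set E}
    {f g : E → ℝ} {K : ℝ≥0} (hf : LipschitzOnWith K f s) (hg : LipschitzOnWith K g s)
    {x a : E} (hx : x ∈ s) (ha : a ∈ s) {δ ε : ℝ} (hxa : K * ‖x - a‖ ≤ δ)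
    (hfg : |f a - g a| < ε) : |f x - g x| < ε + 2 * δ := by
  have hfxa := hf.dist_le_mul x hx a ha
  have hgxa := hg.dist_le_mul x hx a ha
  rw [Real.dist_eq, dist_eq_norm] at hfxa hgxa
  rw [abs_sub_comm] at hgxa
  linarith [abs_sub_le (f x) (f a) (g x), abs_sub_le (f a) (g a) (g x)]

theorem finite_sample_reconstruction_general
    {H : Type*} [NormedAddCommGroup H] [InnerProductSpace ℝ H] [CompleteSpace H]
    (C : Set H) (hCconv : Convex ℝ C)
    (L : ℝ) (hL : 0 < L) (ρ : H → ℝ)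
    (hρconv : ∀ x ∈ C, ∀ y ∈ C, ∀ t : ℝ, 0 ≤ t → t ≤ 1 →
      ρ (t • x + (1 - t) • y) ≤ t * ρ x + (1 - t) * ρ y)
    (hρlip : ∀ x ∈ C, ∀ y ∈ C, |ρ x - ρ y| ≤ L * ‖x - y‖)
    (N : ℕ) (hN : 1 ≤ N) (ξ : Fin N → H) (hξ : ∀ n, ξ n ∈ C)
    (y : Fin N → ℝ) (hy : ∀ n, y n = ρ (ξ n))
    (ε : ℝ) (hε : 0 < ε) :
    ∃ (M : ℕ) (p : Fin M → H) (f : H → ℝ),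
      0 < M ∧
      (∀ m, ‖p m‖ ≤ L) ∧
      (∀ x, f x = ⨆ m : Fin M,
        (⟪p m, x⟫ + ⨅ n : Fin N, (y n - ⟪p m, ξ n⟫))) ∧
      (∀ x z : H, ∀ t : ℝ, 0 ≤ t → t ≤ 1 →
        f (t • x + (1 - t) • z) ≤ t * f x + (1 - t) * f z) ∧
      (∀ x z : H, |f x - f z| ≤ L * ‖x - z‖) ∧
      (∀ n, |ρ (ξ n) - f (ξ n)| < ε) ∧
      ((∀ x ∈ C, ∃ n, ‖x - ξ n‖ ≤ ε / (4 * L)) →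
        (∀ n, |ρ (ξ n) - f (ξ n)| < ε / 2) →
        ∀ x ∈ C, |ρ x - f x| < ε) := by
  lift L to ℝ≥0 using hL.le
  have : Nonempty (Fin N) := ⟨⟨0, hN⟩⟩
  have hρC : ConvexOn ℝ C ρ := ⟨hCconv, fun x hx z hz a b ha hb hab => by
    obtain rfl : b = 1 - a := by linarith
    simpa using hρconv x hx z hz a ha (by linarith)⟩
  have hρL : LipschitzOnWith L ρ C := LipschitzOnWith.of_dist_le_mul fun x hx z hz => by
    simpa [Real.dist_eq, dist_eq_norm] using hρlip x hx z hz
  choose p hp hsub using fun k => hρC.exists_inner_le_of_lipschitzOnWith hρL (hξ k)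
  set f := maxAffine p fun m => ⨅ n, y n - ⟪p m, ξ n⟫
  have hf : LipschitzWith L f := lipschitzWith_maxAffine p _ hp
  have hfξ : ∀ k, f (ξ k) = ρ (ξ k) := fun k =>
    (maxAffine_apply_of_subgradient p (fun m n => by simpa only [hy] using hsub m (ξ n) (hξ n)) k).trans
      (hy k)
  refine ⟨N, p, f, hN, hp, fun x => rfl, fun x z t ht₀ ht₁ => ?_, fun x z => ?_,
    fun n => by simp [hfξ, hε], fun hnet hacc x hx => ?_⟩
  · exact (convexOn_maxAffine p _).2 trivial trivial ht₀ (sub_nonneg.2 ht₁) (by ring)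
  · simpa [Real.dist_eq, dist_eq_norm] using hf.dist_le_mul x z
  · obtain ⟨n, hn⟩ := hnet x hx
    have hδ : (L : ℝ) * ‖x - ξ n‖ ≤ ε / 4 :=
      calc (L : ℝ) * ‖x - ξ n‖ ≤ L * (ε / (4 * L)) := by gcongr
        _ = ε / 4 := by field_simp
    have := abs_sub_lt_of_lipschitzOnWith hρL hf.lipschitzOnWith hx (hξ n) hδ (hacc n)
    linarith

/-- finite-sample neural reconstruction.  Given samples of a
convex `L`-Lipschitz functional on a compact convex set, there is a finite
max-min formula, convex and `L`-Lipschitz on `H`, matching the samples to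
accuracy `ε`; moreover if the samples form an `ε/(4L)`-net of `C` and the
sample accuracy is `ε/2`, then the approximation is uniformly `ε`-accurate on
`C`. -/
theorem finite_sample_reconstruction
    {H : Type*} [NormedAddCommGroup H] [InnerProductSpace ℝ H] [CompleteSpace H]
    [TopologicalSpace.SeparableSpace H]
    (C : Set H) (hCcpt : IsCompact C) (hCconv : Convex ℝ C)
    (L : ℝ) (hL : 0 < L) (ρ : H → ℝ)
    (hρconv : ∀ x ∈ C, ∀ y ∈ C, ∀ t : ℝ, 0 ≤ t → t ≤ 1 →
      ρ (t • x + (1 - t) • y) ≤ t * ρ x + (1 - t) * ρ y)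
    (hρlip : ∀ x ∈ C, ∀ y ∈ C, |ρ x - ρ y| ≤ L * ‖x - y‖)
    (N : ℕ) (hN : 1 ≤ N) (ξ : Fin N → H) (hξ : ∀ n, ξ n ∈ C)
    (y : Fin N → ℝ) (hy : ∀ n, y n = ρ (ξ n))
    (ε : ℝ) (hε : 0 < ε) :
    ∃ (M : ℕ) (p : Fin M → H) (f : H → ℝ),
      0 < M ∧
      (∀ m, ‖p m‖ ≤ L) ∧
      (∀ x, f x = ⨆ m : Fin M,
        (⟪p m, x⟫ + ⨅ n : Fin N, (y n - ⟪p m, ξ n⟫))) ∧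
      (∀ x z : H, ∀ t : ℝ, 0 ≤ t → t ≤ 1 →
        f (t • x + (1 - t) • z) ≤ t * f x + (1 - t) * f z) ∧
      (∀ x z : H, |f x - f z| ≤ L * ‖x - z‖) ∧
      (∀ n, |ρ (ξ n) - f (ξ n)| < ε) ∧
      ((∀ x ∈ C, ∃ n, ‖x - ξ n‖ ≤ ε / (4 * L)) →
        (∀ n, |ρ (ξ n) - f (ξ n)| < ε / 2) →
        ∀ x ∈ C, |ρ x - f x| < ε) :=
  finite_sample_reconstruction_general C hCconv L hL ρ hρconv hρlip N hN ξ hξ y hy ε hε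
end

section
/- Let H be a real Hilbert space, let V ⊆ H be a closed linear subspace with orthogonal projection P : H → V, let L ≥ 0, let N ≥ 1, let ξ_1, …, ξ_N ∈ H and y_1, …, y_N ∈ ℝ, and for x, p ∈ H set Φ_x(p) = ⟨p, x⟩ + min_{1 ≤ n ≤ N} ( y_n − ⟨p, ξ_n⟩ ). Let α ≥ 0 and let x ∈ H be such that dist(x, V) ≤ α and dist(ξ_n, V) ≤ α for every n. Then for every p ∈ H with ‖p‖ ≤ L, the projected point P p satisfies ‖P p‖ ≤ L and | Φ_x(p) − Φ_x(P p) | ≤ 2 L α. Consequently, 0 ≤ sup_{‖p‖ ≤ L} Φ_x(p) − sup_{p ∈ V, ‖p‖ ≤ L} Φ_x(p) ≤ 2 L α. -/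
/-!
Write `P` for the projection onto `V`. Since `p - P p ⊥ V`, we have
`⟪p, w⟫ - ⟪P p, w⟫ = ⟪p - P p, w - P w⟫`, and Cauchy–Schwarz bounds this by
`‖p‖ · dist(w, V) ≤ L α` for `w = x` and `w = ξ n`. A minimum of finitely many terms, each moved by
at most `L α`, moves by at most `L α`, so `Φ_x` moves by at most `2 L α`. Since `P` maps the
`L`-ball into the `L`-ball of `V`, the two suprema differ by at most that much.
-/

open scoped RealInnerProductSpace

open Metric Set

theorem ciInf_le_ciInf_add_of_forall_le {ι : Type*} [Nonempty ι] [Finite ι] {f g : ι → ℝ}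
    {c : ℝ} (h : ∀ i, f i ≤ g i + c) : ⨅ i, f i ≤ (⨅ i, g i) + c := by
  rw [← sub_le_iff_le_add]
  exact le_ciInf fun i ↦ sub_le_iff_le_add.2 <| (ciInf_le (finite_range f).bddBelow i).trans (h i)

theorem abs_ciInf_sub_ciInf_le {ι : Type*} [Nonempty ι] [Finite ι] {f g : ι → ℝ} {c : ℝ}
    (h : ∀ i, |f i - g i| ≤ c) : |(⨅ i, f i) - ⨅ i, g i| ≤ c := by
  rw [abs_sub_le_iff, sub_le_iff_le_add', sub_le_iff_le_add']
  constructor <;> refine ciInf_le_ciInf_add_of_forall_le fun i ↦ ?_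
  · linarith [(abs_sub_le_iff.1 (h i)).1]
  · linarith [(abs_sub_le_iff.1 (h i)).2]

theorem ciSup_le_ciSup_add_of_forall_exists {ι ι' : Sort*} [Nonempty ι] {f : ι → ℝ}
    {g : ι' → ℝ} {c : ℝ} (hg : BddAbove (range g)) (h : ∀ i, ∃ i', f i ≤ g i' + c) :
    ⨆ i, f i ≤ (⨆ i', g i') + c :=
  ciSup_le fun i ↦ (h i).elim fun i' hi ↦ hi.trans <| add_le_add_left (le_ciSup hg i') c

namespace Submodule

variable {H : Type*} [NormedAddCommGroup H] [InnerProductSpace ℝ H]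
  (V : Submodule ℝ H) [V.HasOrthogonalProjection]

theorem norm_sub_starProjection_eq_infDist (w : H) :
    ‖w - V.starProjection w‖ = infDist w V := by
  rw [starProjection_minimal, infDist_eq_iInf]
  simp only [dist_eq_norm]
  rfl

theorem norm_sub_starProjection_le (p : H) : ‖p - V.starProjection p‖ ≤ ‖p‖ := by
  rw [norm_sub_starProjection_eq_infDist]
  simpa using infDist_le_dist_of_mem (x := p) V.zero_mem

theorem abs_inner_sub_inner_starProjection_le (p w : H) :
    |⟪p, w⟫ - ⟪V.starProjection p, w⟫| ≤ ‖p‖ * infDist w V := by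
  have hperp : ⟪p - V.starProjection p, V.starProjection w⟫ = 0 :=
    V.starProjection_inner_eq_zero p _ (V.starProjection_apply_mem w)
  have hsplit : ⟪p, w⟫ - ⟪V.starProjection p, w⟫
      = ⟪p - V.starProjection p, w - V.starProjection w⟫ := by
    rw [inner_sub_right, hperp, sub_zero, inner_sub_left]
  rw [hsplit, ← V.norm_sub_starProjection_eq_infDist]
  exact (abs_real_inner_le_norm _ _).trans <|
    mul_le_mul_of_nonneg_right (V.norm_sub_starProjection_le p) (norm_nonneg _)

end Submodule

section DualObjective

variable {H : Type*} [NormedAddCommGroup H] [InnerProductSpace ℝ H]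
  {ι : Type*} [Finite ι] (ξ : ι → H) (y : ι → ℝ) (x : H)

noncomputable def dualObjective (q : H) : ℝ := ⟪q, x⟫ + ⨅ n, (y n - ⟪q, ξ n⟫)

theorem dualObjective_le (n : ι) (q : H) :
    dualObjective ξ y x q ≤ ‖q‖ * (‖x‖ + ‖ξ n‖) + y n := by
  have hinf : ⨅ m, (y m - ⟪q, ξ m⟫) ≤ y n - ⟪q, ξ n⟫ :=
    ciInf_le (finite_range _).bddBelow n
  have hx := real_inner_le_norm q x
  have hξ := neg_le_of_abs_le (abs_real_inner_le_norm q (ξ n))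
  rw [dualObjective]
  linarith

theorem abs_dualObjective_sub_le [Nonempty ι] {p q : H} {c : ℝ} (hx : |⟪p, x⟫ - ⟪q, x⟫| ≤ c)
    (hξ : ∀ n, |⟪p, ξ n⟫ - ⟪q, ξ n⟫| ≤ c) :
    |dualObjective ξ y x p - dualObjective ξ y x q| ≤ 2 * c := by
  have hinf : |(⨅ n, (y n - ⟪p, ξ n⟫)) - ⨅ n, (y n - ⟪q, ξ n⟫)| ≤ c :=
    abs_ciInf_sub_ciInf_le fun n ↦ by
      rw [sub_sub_sub_cancel_left, abs_sub_comm]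
      exact hξ n
  calc |dualObjective ξ y x p - dualObjective ξ y x q|
      = |(⟪p, x⟫ - ⟪q, x⟫) + ((⨅ n, (y n - ⟪p, ξ n⟫)) - ⨅ n, (y n - ⟪q, ξ n⟫))| := by
        rw [dualObjective, dualObjective]; ring_nf
    _ ≤ c + c := (abs_add_le _ _).trans (add_le_add hx hinf)
    _ = 2 * c := by ring

theorem abs_dualObjective_sub_starProjection_le [Nonempty ι] (V : Submodule ℝ H)
    [V.HasOrthogonalProjection] {L α : ℝ} (hL : 0 ≤ L) (hx : infDist x V ≤ α)
    (hξ : ∀ n, infDist (ξ n) V ≤ α) {p : H} (hp : ‖p‖ ≤ L) :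
    |dualObjective ξ y x p - dualObjective ξ y x (V.starProjection p)| ≤ 2 * L * α := by
  have key : ∀ w : H, infDist w V ≤ α → |⟪p, w⟫ - ⟪V.starProjection p, w⟫| ≤ L * α :=
    fun w hw ↦ (V.abs_inner_sub_inner_starProjection_le p w).trans <|
      mul_le_mul hp hw infDist_nonneg hL
  rw [mul_assoc]
  exact abs_dualObjective_sub_le ξ y x (key x hx) fun n ↦ key (ξ n) (hξ n)

end DualObjective

theorem dual_objective_projection_estimate_general
    {H : Type*} [NormedAddCommGroup H] [InnerProductSpace ℝ H]
    (V : Submodule ℝ H) [CompleteSpace V]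
    (L : ℝ) (hL : 0 ≤ L) (N : ℕ) (hN : 1 ≤ N) (ξ : Fin N → H) (y : Fin N → ℝ)
    (Φ : H → H → ℝ)
    (hΦ : ∀ x q, Φ x q = ⟪q, x⟫ + ⨅ n : Fin N, (y n - ⟪q, ξ n⟫))
    (P : H → H) (hP : ∀ z, P z = (V.orthogonalProjectionOnto z : H))
    (α : ℝ) (x : H)
    (hx : Metric.infDist x (V : Set H) ≤ α)
    (hξd : ∀ n, Metric.infDist (ξ n) (V : Set H) ≤ α) :
    (∀ p : H, ‖p‖ ≤ L → ‖P p‖ ≤ L ∧ |Φ x p - Φ x (P p)| ≤ 2 * L * α) ∧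
    (0 ≤ (⨆ p : {p : H // ‖p‖ ≤ L}, Φ x p.1)
        - (⨆ p : {p : H // p ∈ V ∧ ‖p‖ ≤ L}, Φ x p.1)) ∧
    ((⨆ p : {p : H // ‖p‖ ≤ L}, Φ x p.1)
        - (⨆ p : {p : H // p ∈ V ∧ ‖p‖ ≤ L}, Φ x p.1) ≤ 2 * L * α) := by
  have : Nonempty (Fin N) := ⟨⟨0, hN⟩⟩
  obtain rfl : Φ = fun x ↦ dualObjective ξ y x := funext₂ hΦ
  obtain rfl : P = V.starProjection := funext fun z ↦ (hP z).trans (V.starProjection_apply z).symm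
  have hball (p : H) (hp : ‖p‖ ≤ L) :
      ‖V.starProjection p‖ ≤ L ∧
        |dualObjective ξ y x p - dualObjective ξ y x (V.starProjection p)| ≤ 2 * L * α :=
    ⟨(V.norm_starProjection_apply_le p).trans hp,
      abs_dualObjective_sub_starProjection_le ξ y x V hL hx hξd hp⟩
  have hbound (p : H) (hp : ‖p‖ ≤ L) :
      dualObjective ξ y x p ≤ L * (‖x‖ + ‖ξ ⟨0, hN⟩‖) + y ⟨0, hN⟩ :=
    (dualObjective_le ξ y x _ p).trans (by gcongr)
  have hbdd : BddAbove (range fun p : {p : H // ‖p‖ ≤ L} ↦ dualObjective ξ y x p) :=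
    ⟨_, forall_mem_range.2 fun p ↦ hbound p p.2⟩
  have hVbdd : BddAbove (range fun p : {p : H // p ∈ V ∧ ‖p‖ ≤ L} ↦ dualObjective ξ y x p) :=
    ⟨_, forall_mem_range.2 fun p ↦ hbound p p.2.2⟩
  have : Nonempty {p : H // p ∈ V ∧ ‖p‖ ≤ L} := ⟨⟨0, V.zero_mem, by simpa using hL⟩⟩
  have : Nonempty {p : H // ‖p‖ ≤ L} := ⟨⟨0, by simpa using hL⟩⟩
  refine ⟨hball, sub_nonneg.2 ?_, sub_le_iff_le_add'.2 ?_⟩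
  · exact ciSup_le fun p ↦ le_ciSup hbdd ⟨p, p.2.2⟩
  · exact ciSup_le_ciSup_add_of_forall_exists hVbdd fun p ↦
      ⟨⟨_, V.starProjection_apply_mem p, (hball p p.2).1⟩,
        sub_le_iff_le_add'.1 (abs_sub_le_iff.1 (hball p p.2).2).1⟩

/-- projecting the dual variable onto a subspace which
`α`-approximates the point `x` and the sample points changes the dual
objective by at most `2Lα`; consequently the sup over the sub-ball of `V` is
within `2Lα` of the sup over the full ball. -/
theorem dual_objective_projection_estimate
    {H : Type*} [NormedAddCommGroup H] [InnerProductSpace ℝ H] [CompleteSpace H]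
    (V : Submodule ℝ H) [CompleteSpace V]
    (L : ℝ) (hL : 0 ≤ L) (N : ℕ) (hN : 1 ≤ N) (ξ : Fin N → H) (y : Fin N → ℝ)
    (Φ : H → H → ℝ)
    (hΦ : ∀ x q, Φ x q = ⟪q, x⟫ + ⨅ n : Fin N, (y n - ⟪q, ξ n⟫))
    (P : H → H) (hP : ∀ z, P z = (V.orthogonalProjectionOnto z : H))
    (α : ℝ) (hα : 0 ≤ α) (x : H)
    (hx : Metric.infDist x (V : Set H) ≤ α)
    (hξd : ∀ n, Metric.infDist (ξ n) (V : Set H) ≤ α) :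
    (∀ p : H, ‖p‖ ≤ L → ‖P p‖ ≤ L ∧ |Φ x p - Φ x (P p)| ≤ 2 * L * α) ∧
    (0 ≤ (⨆ p : {p : H // ‖p‖ ≤ L}, Φ x p.1)
        - (⨆ p : {p : H // p ∈ V ∧ ‖p‖ ≤ L}, Φ x p.1)) ∧
    ((⨆ p : {p : H // ‖p‖ ≤ L}, Φ x p.1)
        - (⨆ p : {p : H // p ∈ V ∧ ‖p‖ ≤ L}, Φ x p.1) ≤ 2 * L * α) :=
  dual_objective_projection_estimate_general V L hL N hN ξ y Φ hΦ P hP α x hx hξd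
end
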